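/- arXiv:2505.06213 — 9 statements merged into one kernel-verified Lean document; each statement's English description precedes it below -/
import Mathlib

section
/- Let A be a Dedekind domain and B a free A-algebra of finite rank n. Then B has an A-basis of the form {1, ω₂, …, ωₙ}. -/
/-!
If `1 = ∑ cᵢ bᵢ` in an `A`-basis `b` of `B`, the coordinates `cᵢ` generate the unit ideal: the
`j`-th coordinate of `bⱼ = ∑ cᵢ (bⱼ bᵢ)` is `1` and lies in `(cᵢ)`. It then suffices to complete a
unimodular column over a Dedekind domain `A` to an invertible matrix. Columns of length one and
two are completed over any commutative ring. A longer column can be shortened: a Dedekind domain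
has stable rank at most two, i.e. suitable multiples of the last entry can be added to the others
so that they alone generate the unit ideal. This uses the Chinese remainder theorem at the finitely
many maximal ideals containing a nonzero element. A block lower-triangular matrix then lifts a
completion of the shortened column to one of the original column.
-/

open Matrix

theorem Ideal.exists_add_mul_notMem_of_finite {A : Type*} [CommRing A] {x z : A}
    (hfin : {m : Ideal A | m.IsMaximal ∧ x ∈ m ∧ z ∉ m}.Finite) (y : A) :
    ∃ t, ∀ m : Ideal A, m.IsMaximal → x ∈ m → z ∉ m → y + t * z ∉ m := by
  classical
  have := hfin.to_subtype
  obtain ⟨t, ht⟩ := exists_forall_sub_mem_ideal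
    (I := fun m : {m : Ideal A | m.IsMaximal ∧ x ∈ m ∧ z ∉ m} => m.1)
    (fun m m' hne =>
      have := m.2.1; have := m'.2.1; isCoprime_of_isMaximal (Subtype.coe_ne_coe.2 hne))
    (fun m => if y ∈ m.1 then 1 else 0)
  refine ⟨t, fun m hm hxm hzm hmem => ?_⟩
  have hsub := ht ⟨m, hm, hxm, hzm⟩
  -- modulo `m`, `y + t * z` is `y + z` if `y ∈ m` and `y` otherwise
  by_cases hym : y ∈ m
  · simp only [hym, if_true] at hsub
    exact hzm (by convert m.sub_mem (m.sub_mem hmem (m.mul_mem_right z hsub)) hym using 1; ring)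
  · simp only [hym, if_false, sub_zero] at hsub
    exact hym (by convert m.sub_mem hmem (m.mul_mem_right z hsub) using 1; ring)

namespace IsDedekindDomain

variable {A : Type*} [CommRing A] [IsDedekindDomain A]

theorem finite_setOf_isMaximal_mem {x : A} (hx : x ≠ 0) :
    {m : Ideal A | m.IsMaximal ∧ x ∈ m}.Finite := by
  refine ((Ideal.finite_factors (I := Ideal.span {x}) (by simpa using hx)).image
    HeightOneSpectrum.asIdeal).subset ?_
  rintro m ⟨hm, hxm⟩
  have hne : m ≠ ⊥ := fun h => hx (by simpa [h] using hxm)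
  exact ⟨⟨m, hm.isPrime, hne⟩, Ideal.dvd_iff_le.2 ((Ideal.span_singleton_le_iff_mem _).2 hxm), rfl⟩

theorem exists_finite_setOf_isMaximal_add_mul_mem (x z : A) :
    ∃ s : A, {m : Ideal A | m.IsMaximal ∧ x + s * z ∈ m ∧ z ∉ m}.Finite := by
  by_cases hx : x = 0
  · refine ⟨1, Set.finite_empty.subset ?_⟩
    rintro m ⟨-, hm, hzm⟩
    exact hzm (by simpa [hx] using hm)
  · exact ⟨0, (finite_setOf_isMaximal_mem hx).subset fun m ⟨hm, hxm, _⟩ => ⟨hm, by simpa using hxm⟩⟩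

theorem exists_span_castSucc_add_mul_last_eq_top {n : ℕ} (c : Fin (n + 3) → A)
    (hc : Ideal.span (Set.range c) = ⊤) :
    ∃ t : Fin (n + 2) → A,
      Ideal.span (Set.range fun i => c i.castSucc + t i * c (Fin.last _)) = ⊤ := by
  set z := c (Fin.last _)
  obtain ⟨s, hs⟩ := exists_finite_setOf_isMaximal_add_mul_mem (c 0) z
  obtain ⟨t₁, ht₁⟩ := Ideal.exists_add_mul_notMem_of_finite hs (c 1)
  set t : Fin (n + 2) → A := Fin.cons s (Fin.cons t₁ 0)
  refine ⟨t, ?_⟩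
  by_contra h
  obtain ⟨m, hm, hle⟩ := Ideal.exists_le_maximal _ h
  have hmem (i : Fin (n + 2)) : c i.castSucc + t i * z ∈ m :=
    hle (Ideal.subset_span ⟨i, rfl⟩)
  -- `m` contains `z`, hence all of `c`, or it contains `c 0 + s * z` but not `c 1 + t₁ * z`
  by_cases hzm : z ∈ m
  · refine hm.ne_top (top_unique ?_)
    rw [← hc, Ideal.span_le]
    rintro _ ⟨j, rfl⟩
    induction j using Fin.lastCases with
    | last => exact hzm
    | cast i => simpa using m.sub_mem (hmem i) (m.mul_mem_left (t i) hzm)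
  · exact ht₁ m hm (by simpa [t] using hmem 0) hzm (by simpa [t] using hmem 1)

end IsDedekindDomain

namespace Matrix

variable {R : Type*} [CommRing R]

theorem exists_isUnit_det_col_zero_eq_fin_one (c : Fin 1 → R)
    (hc : Ideal.span (Set.range c) = ⊤) :
    ∃ M : Matrix (Fin 1) (Fin 1) R, IsUnit M.det ∧ M.col 0 = c := by
  refine ⟨of fun i _ => c i, ?_, rfl⟩
  rwa [det_unique, of_apply, ← Ideal.span_singleton_eq_top, ← Set.range_unique]

theorem exists_isUnit_det_col_zero_eq_fin_two (c : Fin 2 → R)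
    (hc : Ideal.span (Set.range c) = ⊤) :
    ∃ M : Matrix (Fin 2) (Fin 2) R, IsUnit M.det ∧ M.col 0 = c := by
  obtain ⟨g, hg⟩ := Ideal.mem_span_range_iff_exists_fun.1 (hc ▸ Submodule.mem_top : (1 : R) ∈ _)
  rw [Fin.sum_univ_two] at hg
  refine ⟨!![c 0, -g 1; c 1, g 0], ?_, ?_⟩
  · rw [det_fin_two_of, show c 0 * g 0 - -g 1 * c 1 = 1 by linear_combination hg]
    exact isUnit_one
  · ext i
    fin_cases i <;> rfl

theorem exists_isUnit_det_col_zero_eq_snoc {k : ℕ} {M : Matrix (Fin (k + 1)) (Fin (k + 1)) R}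
    (hM : IsUnit M.det) (t : Fin (k + 1) → R) (a : R) :
    ∃ N : Matrix (Fin (k + 2)) (Fin (k + 2)) R, IsUnit N.det ∧
      N.col 0 = Fin.snoc (M.col 0 - a • t) a := by
  set B := replicateCol (Fin 1) (-t)
  set C := replicateRow (Fin 1) (Pi.single (0 : Fin (k + 1)) a)
  set e : Fin (k + 1) ⊕ Fin 1 ≃ Fin (k + 2) := finSumFinEquiv
  have he0 : e.symm 0 = Sum.inl 0 := finSumFinEquiv_symm_apply_castAdd 0
  refine ⟨reindex e e (fromBlocks (M + B * C) B C 1), ?_, ?_⟩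
  · -- the Schur complement of the corner `1` is `M`
    rwa [det_reindex_self, det_fromBlocks_one₂₂, add_sub_cancel_right]
  · ext i
    induction i using Fin.lastCases with
    | last => simp [he0, e, C, finSumFinEquiv_symm_last]
    | cast i =>
      simp [he0, e, B, C, mul_apply, sub_eq_add_neg, finSumFinEquiv_symm_apply_castSucc, mul_comm]

end Matrix

theorem IsDedekindDomain.exists_isUnit_det_col_zero_eq {A : Type*} [CommRing A]
    [IsDedekindDomain A] {n : ℕ} (c : Fin (n + 1) → A) (hc : Ideal.span (Set.range c) = ⊤) :
    ∃ M : Matrix (Fin (n + 1)) (Fin (n + 1)) A, IsUnit M.det ∧ M.col 0 = c := by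
  induction n with
  | zero => exact exists_isUnit_det_col_zero_eq_fin_one c hc
  | succ n ih =>
    cases n with
    | zero => exact exists_isUnit_det_col_zero_eq_fin_two c hc
    | succ k =>
      obtain ⟨t, ht⟩ := exists_span_castSucc_add_mul_last_eq_top c hc
      obtain ⟨M, hM, hMc⟩ := ih _ ht
      obtain ⟨N, hN, hNc⟩ := exists_isUnit_det_col_zero_eq_snoc hM t (c (Fin.last _))
      refine ⟨N, hN, ?_⟩
      rw [hNc, hMc]
      ext i
      induction i using Fin.lastCases with
      | last => simp
      | cast i => simp; ring

namespace Module.Basis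

theorem span_repr_one_eq_top {A B ι : Type*} [CommSemiring A] [Semiring B] [Algebra A B]
    [Nonempty ι] (b : Basis ι A B) : Ideal.span (Set.range (b.repr 1)) = ⊤ := by
  obtain ⟨i⟩ := ‹Nonempty ι›
  have hbi : b i = (b.repr 1).sum fun j c => c • (b i * b j) := by
    conv_lhs => rw [← mul_one (b i), ← b.linearCombination_repr 1]
    simp [Finsupp.linearCombination_apply, Finsupp.mul_sum]
  have h1 := congr_arg (b.coord i) hbi
  simp only [coord_apply, repr_self, Finsupp.single_eq_same, map_finsuppSum, map_smul,
    smul_eq_mul] at h1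
  rw [Ideal.eq_top_iff_one, h1]
  exact Ideal.sum_mem _ fun j _ => Ideal.mul_mem_right _ _ (Ideal.subset_span ⟨j, rfl⟩)

theorem exists_basis_zero_eq_of_span_repr_eq_top {A M : Type*} [CommRing A] [IsDedekindDomain A]
    [AddCommGroup M] [Module A M] {n : ℕ} (b : Basis (Fin (n + 1)) A M) {v : M}
    (hv : Ideal.span (Set.range (b.repr v)) = ⊤) :
    ∃ b' : Basis (Fin (n + 1)) A M, b' 0 = v := by
  obtain ⟨P, hP, hPv⟩ := IsDedekindDomain.exists_isUnit_det_col_zero_eq _ hv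
  have hP' : IsUnit (LinearMap.toMatrix b b (toLin b b P)).det := by
    rwa [LinearMap.toMatrix_toLin]
  refine ⟨b.map (LinearEquiv.ofIsUnitDet hP'), ?_⟩
  rw [map_apply, LinearEquiv.ofIsUnitDet_apply, toLin_self]
  conv_rhs => rw [← b.sum_repr v]
  exact Finset.sum_congr rfl fun j _ => by rw [← hPv, col_apply]

end Module.Basis

theorem basis_starting_with_one_general
    (A B : Type*) [CommRing A] [IsDedekindDomain A] [CommRing B] [Algebra A B]
    [Module.Free A B] (n : ℕ) (hn : 0 < n) (hrank : Module.finrank A B = n) :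
    ∃ b : Module.Basis (Fin n) A B, b ⟨0, hn⟩ = 1 := by
  have : Module.Finite A B := Module.finite_of_finrank_pos (hrank ▸ hn)
  obtain ⟨m, rfl⟩ : ∃ m, n = m + 1 := ⟨n - 1, by omega⟩
  let b := Module.finBasisOfFinrankEq A B hrank
  exact b.exists_basis_zero_eq_of_span_repr_eq_top b.span_repr_one_eq_top

/-- Let `A` be a Dedekind domain and `B` a free `A`-algebra of finite rank `n`.
Then `B` has an `A`-basis of the form `{1, ω₂, …, ωₙ}`. -/
theorem basis_starting_with_one
    (A B : Type*) [CommRing A] [IsDedekindDomain A] [CommRing B] [Algebra A B]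
    (hinj : Function.Injective (algebraMap A B))
    [Module.Free A B] (n : ℕ) (hn : 0 < n) (hrank : Module.finrank A B = n) :
    ∃ b : Module.Basis (Fin n) A B, b ⟨0, hn⟩ = 1 :=
  basis_starting_with_one_general A B n hn hrank
end

section
/- Let K be a field of characteristic ≠ 2,3 and D ∈ K nonzero. Every binary cubic form over K with discriminant D that is reducible over K is SL₂(K)-equivalent (under the twisted action γ⋆f(v) = det(γ)⁻¹f(v·γ), which for SL₂ is just substitution) to the form f₀ = X²Y − (D/4)Y³. -/
set_option maxHeartbeats 4000000 in
/-- Over a field `K` of characteristic `≠ 2, 3`, every binary cubic form with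
nonzero discriminant `D` that is reducible over `K` is `SL₂(K)`-equivalent (by
linear substitution of variables) to `f₀ = X²Y − (D/4)Y³`. -/
theorem reducible_cubic_SL2_equivalent (K : Type*) [Field K]
    (h2 : (2 : K) ≠ 0) (h3 : (3 : K) ≠ 0)
    (a b c d D : K) (hD : D ≠ 0)
    (hdisc : b ^ 2 * c ^ 2 + 18 * a * b * c * d - 4 * a * c ^ 3 - 4 * d * b ^ 3
      - 27 * a ^ 2 * d ^ 2 = D)
    (hred : ∃ p q e f g : K, (p ≠ 0 ∨ q ≠ 0) ∧
      ∀ X Y : K,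
        a * X ^ 3 + b * X ^ 2 * Y + c * X * Y ^ 2 + d * Y ^ 3 =
          (p * X + q * Y) * (e * X ^ 2 + f * X * Y + g * Y ^ 2)) :
    ∃ γ : Matrix (Fin 2) (Fin 2) K, γ.det = 1 ∧
      ∀ X Y : K,
        a * (X * γ 0 0 + Y * γ 1 0) ^ 3
          + b * (X * γ 0 0 + Y * γ 1 0) ^ 2 * (X * γ 0 1 + Y * γ 1 1)
          + c * (X * γ 0 0 + Y * γ 1 0) * (X * γ 0 1 + Y * γ 1 1) ^ 2
          + d * (X * γ 0 1 + Y * γ 1 1) ^ 3 =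
        X ^ 2 * Y - (D / 4) * Y ^ 3 := by
  obtain ⟨p, q, e, f, g, -, hfac⟩ := hred
  have h4 : (4 : K) ≠ 0 := by
    have h42 : (4 : K) = 2 * 2 := by norm_num
    rw [h42]; exact mul_ne_zero h2 h2
  have ha : a = p * e := by linear_combination hfac 1 0
  have hd : d = q * g := by linear_combination hfac 0 1
  have hb : b = p * f + q * e := by
    refine mul_left_cancel₀ h2 ?_
    linear_combination hfac 1 1 - hfac 1 (-1) - 2 * hd
  have hc : c = p * g + q * f := by
    refine mul_left_cancel₀ h2 ?_
    linear_combination hfac 1 1 + hfac 1 (-1) - 2 * ha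
  subst ha hb hc hd
  have hDeq : (e * q ^ 2 - f * p * q + g * p ^ 2) ^ 2 * (f ^ 2 - 4 * e * g) = D := by
    linear_combination hdisc
  have he1 : e * q ^ 2 - f * p * q + g * p ^ 2 ≠ 0 := by
    intro h
    apply hD
    rw [← hDeq, h]; ring
  obtain ⟨u, hu⟩ : ∃ u : K, (e * q ^ 2 - f * p * q + g * p ^ 2) * u = 1 :=
    ⟨_, mul_inv_cancel₀ he1⟩
  obtain ⟨t, ht⟩ : ∃ t : K, (2 : K) * t = 1 := ⟨_, mul_inv_cancel₀ h2⟩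
  refine ⟨!![q * u, -(p * u); g * p - f * (q * t), e * q - f * (p * t)], ?_, ?_⟩
  · rw [Matrix.det_fin_two_of]
    linear_combination hu - u * f * p * q * ht
  · intro X Y
    have hDdiv : D / 4 = (e * q ^ 2 - f * p * q + g * p ^ 2) ^ 2 * (f ^ 2 - 4 * e * g) * (t * t) := by
      rw [div_eq_iff h4, ← hDeq]
      linear_combination (-(e * q ^ 2 - f * p * q + g * p ^ 2) ^ 2 * (f ^ 2 - 4 * e * g) * (2 * t + 1)) * ht
    rw [hDdiv]
    simp only [Matrix.cons_val', Matrix.cons_val_zero, Matrix.cons_val_one,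
      Matrix.head_cons, Matrix.empty_val', Matrix.cons_val_fin_one, Matrix.head_fin_const,
      Matrix.of_apply]
    refine mul_left_cancel₀ (pow_ne_zero 3 he1) ?_
    linear_combination (q^6*e^3*X^2*Y + q^8*e^4*u*X^2*Y + -3*p*q^5*e^2*f*X^2*Y + -4*p*q^7*e^3*f*u*X^2*Y + 3*p^2*q^4*e*f^2*X^2*Y + 3*p^2*q^4*e^2*g*X^2*Y + 6*p^2*q^6*e^2*f^2*u*X^2*Y + 4*p^2*q^6*e^3*g*u*X^2*Y + -1*p^3*q^3*f^3*X^2*Y + -6*p^3*q^3*e*f*g*X^2*Y + -4*p^3*q^5*e*f^3*u*X^2*Y + -12*p^3*q^5*e^2*f*g*u*X^2*Y + 3*p^4*q^2*f^2*g*X^2*Y + 3*p^4*q^2*e*g^2*X^2*Y + p^4*q^4*f^4*u*X^2*Y + 12*p^4*q^4*e*f^2*g*u*X^2*Y + 6*p^4*q^4*e^2*g^2*u*X^2*Y + -3*p^5*q*f*g^2*X^2*Y + -4*p^5*q^3*f^3*g*u*X^2*Y + -12*p^5*q^3*e*f*g^2*u*X^2*Y + p^6*g^3*X^2*Y + 6*p^6*q^2*f^2*g^2*u*X^2*Y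 + 4*p^6*q^2*e*g^3*u*X^2*Y + -4*p^7*q*f*g^3*u*X^2*Y + p^8*g^4*u*X^2*Y) * hu + (-1*q^10*e^5*f*u*X*Y^2 + q^10*e^5*f^2*t*Y^3 + -1*q^10*e^6*g*Y^3 + -2*q^10*e^6*g*t*Y^3 + -1*p*q^9*e^4*f*u^2*X^2*Y + 3*p*q^9*e^4*f^2*u*X*Y^2 + 2*p*q^9*e^4*f^2*u*t*X*Y^2 + -3*p*q^9*e^4*f^3*t*Y^3 + -1*p*q^9*e^4*f^3*t^2*Y^3 + 2*p*q^9*e^5*f*g*Y^3 + 10*p*q^9*e^5*f*g*t*Y^3 + 4*p^2*q^8*e^3*f^2*u^2*X^2*Y + -3*p^2*q^8*e^3*f^3*u*X*Y^2 + -6*p^2*q^8*e^3*f^3*u*t*X*Y^2 + 3*p^2*q^8*e^3*f^4*t*Y^3 + 2*p^2*q^8*e^3*f^4*t^2*Y^3 + -3*p^2*q^8*e^4*f*g*u*X*Y^2 + -11*p^2*q^8*e^4*f^2*g*t*Y^3 + -5*p^2*q^8*e^5*g^2*Y^3 + -10*p^2*q^8*e^5*g^2*t*Y^3 + -6*p^3*q^7*e^2*f^3*u^2*X^2*Y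 + p^3*q^7*e^2*f^4*u*X*Y^2 + 6*p^3*q^7*e^2*f^4*u*t*X*Y^2 + -1*p^3*q^7*e^2*f^5*t*Y^3 + -4*p^3*q^7*e^3*f*g*u^2*X^2*Y + 6*p^3*q^7*e^3*f^2*g*u*X*Y^2 + 4*p^3*q^7*e^3*f^2*g*u*t*X*Y^2 + -2*p^3*q^7*e^3*f^3*g*Y^3 + -4*p^3*q^7*e^3*f^3*g*t*Y^3 + -4*p^3*q^7*e^3*f^3*g*t^2*Y^3 + 8*p^3*q^7*e^4*f*g^2*Y^3 + 40*p^3*q^7*e^4*f*g^2*t*Y^3 + 4*p^4*q^6*e*f^4*u^2*X^2*Y + -2*p^4*q^6*e*f^5*u*t*X*Y^2 + -2*p^4*q^6*e*f^6*t^2*Y^3 + 12*p^4*q^6*e^2*f^2*g*u^2*X^2*Y + -3*p^4*q^6*e^2*f^3*g*u*X*Y^2 + -6*p^4*q^6*e^2*f^3*g*u*t*X*Y^2 + p^4*q^6*e^2*f^4*g*Y^3 + 11*p^4*q^6*e^2*f^4*g*t*Y^3 + 6*p^4*q^6*e^2*f^4*g*t^2*Y^3 + -2*p^4*q^6*e^3*f*g^2*u*X*Y^2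 + -38*p^4*q^6*e^3*f^2*g^2*t*Y^3 + -10*p^4*q^6*e^4*g^3*Y^3 + -20*p^4*q^6*e^4*g^3*t*Y^3 + -1*p^5*q^5*f^5*u^2*X^2*Y + p^5*q^5*f^7*t^2*Y^3 + -12*p^5*q^5*e*f^3*g*u^2*X^2*Y + -4*p^5*q^5*e*f^5*g*t*Y^3 + -6*p^5*q^5*e^2*f*g^2*u^2*X^2*Y + -4*p^5*q^5*e^2*f^3*g^2*Y^3 + -2*p^5*q^5*e^2*f^3*g^2*t*Y^3 + -6*p^5*q^5*e^2*f^3*g^2*t^2*Y^3 + 12*p^5*q^5*e^3*f*g^3*Y^3 + 60*p^5*q^5*e^3*f*g^3*t*Y^3 + 4*p^6*q^4*f^4*g*u^2*X^2*Y + 2*p^6*q^4*f^5*g*u*t*X*Y^2 + -2*p^6*q^4*f^6*g*t^2*Y^3 + 12*p^6*q^4*e*f^2*g^2*u^2*X^2*Y + 3*p^6*q^4*e*f^3*g^2*u*X*Y^2 + 6*p^6*q^4*e*f^3*g^2*u*t*X*Y^2 + p^6*q^4*e*f^4*g^2*Y^3 + 11*p^6*q^4*e*f^4*g^2*t*Y^3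 + 6*p^6*q^4*e*f^4*g^2*t^2*Y^3 + 2*p^6*q^4*e^2*f*g^3*u*X*Y^2 + -38*p^6*q^4*e^2*f^2*g^3*t*Y^3 + -10*p^6*q^4*e^3*g^4*Y^3 + -20*p^6*q^4*e^3*g^4*t*Y^3 + -6*p^7*q^3*f^3*g^2*u^2*X^2*Y + -1*p^7*q^3*f^4*g^2*u*X*Y^2 + -6*p^7*q^3*f^4*g^2*u*t*X*Y^2 + -1*p^7*q^3*f^5*g^2*t*Y^3 + -4*p^7*q^3*e*f*g^3*u^2*X^2*Y + -6*p^7*q^3*e*f^2*g^3*u*X*Y^2 + -4*p^7*q^3*e*f^2*g^3*u*t*X*Y^2 + -2*p^7*q^3*e*f^3*g^3*Y^3 + -4*p^7*q^3*e*f^3*g^3*t*Y^3 + -4*p^7*q^3*e*f^3*g^3*t^2*Y^3 + 8*p^7*q^3*e^2*f*g^4*Y^3 + 40*p^7*q^3*e^2*f*g^4*t*Y^3 + 4*p^8*q^2*f^2*g^3*u^2*X^2*Y + 3*p^8*q^2*f^3*g^3*u*X*Y^2 + 6*p^8*q^2*f^3*g^3*u*t*X*Y^2 + 3*p^8*q^2*f^4*g^3*t*Y^3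 + 2*p^8*q^2*f^4*g^3*t^2*Y^3 + 3*p^8*q^2*e*f*g^4*u*X*Y^2 + -11*p^8*q^2*e*f^2*g^4*t*Y^3 + -5*p^8*q^2*e^2*g^5*Y^3 + -10*p^8*q^2*e^2*g^5*t*Y^3 + -1*p^9*q*f*g^4*u^2*X^2*Y + -3*p^9*q*f^2*g^4*u*X*Y^2 + -2*p^9*q*f^2*g^4*u*t*X*Y^2 + -3*p^9*q*f^3*g^4*t*Y^3 + -1*p^9*q*f^3*g^4*t^2*Y^3 + 2*p^9*q*e*f*g^5*Y^3 + 10*p^9*q*e*f*g^5*t*Y^3 + p^10*f*g^5*u*X*Y^2 + p^10*f^2*g^5*t*Y^3 + -1*p^10*e*g^6*Y^3 + -2*p^10*e*g^6*t*Y^3) * ht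
end

section
/- Let K be a field of characteristic ≠ 3, L a cubic separable field extension of K, and B an integrally closed subring of L with fraction field L that is a free module of rank 3 over a Dedekind subring A with fraction field K. Then for any A-basis B = {1, ω₂, ω₃} of B, the dehomogenized index form I_B(X,1) is an irreducible polynomial over K, and K[X]/(I_B(X,1)) ≅ L. -/
/-!
Let `e₀ = 1, e₁, e₂` be the `K`-basis of `L` induced by `ω`, with `eᵢ eⱼ = ∑ₖ cᵢⱼₖ eₖ`. Expanding the
determinant gives the cubic `I(X) = c₁₁₂ X³ + (2c₁₂₂ - c₁₁₁) X² + (c₂₂₂ - 2c₁₂₁) X - c₂₂₁`.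
Since `[L : K] = 3` is prime, an element of `L` satisfying a quadratic equation over `K` lies in `K`.
If `I(x) = 0`, then `1, γ, γ²` are dependent for `γ = x e₁ + e₂`, so `γ² = a + bγ` with `a, b ∈ K`,
impossible as `γ ∉ K`; the same argument for `e₁` gives `c₁₁₂ ≠ 0`. Hence `I` is a cubic without
roots in `K`, so irreducible. Associativity `(e₁e₁)e₂ = e₁(e₁e₂)` gives two relations among the
`cᵢⱼₖ` showing that `ρ = (e₁ - c₁₂₂) / c₁₁₂` is a root of `I` in `L`, so `K[X]/(I) ≅ K(ρ) = L`
by comparing degrees.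
-/

open Polynomial Module

noncomputable def indexCubic {R : Type*} [CommRing R] (c : Fin 3 → Fin 3 → Fin 3 → R) :
    R[X] :=
  C (c 1 1 2) * X ^ 3 + C (2 * c 1 2 2 - c 1 1 1) * X ^ 2 + C (c 2 2 2 - 2 * c 1 2 1) * X
    - C (c 2 2 1)

theorem det_eq_indexCubic {R : Type*} [CommRing R] (c : Fin 3 → Fin 3 → Fin 3 → R) :
    Matrix.det !![(1 : R[X]), 0, 0;
      0, X, 1;
      C (c 1 1 0) * X ^ 2 + 2 * C (c 1 2 0) * X + C (c 2 2 0),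
      C (c 1 1 1) * X ^ 2 + 2 * C (c 1 2 1) * X + C (c 2 2 1),
      C (c 1 1 2) * X ^ 2 + 2 * C (c 1 2 2) * X + C (c 2 2 2)] = indexCubic c := by
  rw [Matrix.det_fin_three]
  simp [indexCubic, map_ofNat C]
  ring

theorem natDegree_indexCubic {R : Type*} [CommRing R] {c : Fin 3 → Fin 3 → Fin 3 → R}
    (hc : c 1 1 2 ≠ 0) : (indexCubic c).natDegree = 3 := by
  unfold indexCubic
  compute_degree!

section FieldExtension

variable {K L : Type*} [Field K] [Field L] [Algebra K L]

theorem mem_range_algebraMap_of_aeval_eq_zero (hprime : (finrank K L).Prime) {p : K[X]}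
    (hp : p ≠ 0) (hlt : p.natDegree < finrank K L) {γ : L} (hγ : aeval γ p = 0) :
    γ ∈ (algebraMap K L).range := by
  have : FiniteDimensional K L := Module.finite_of_finrank_pos hprime.pos
  have hle : (minpoly K γ).natDegree ≤ p.natDegree :=
    natDegree_le_of_dvd (minpoly.dvd K γ hγ) hp
  rw [← minpoly.natDegree_eq_one_iff]
  rcases hprime.eq_one_or_self_of_dvd _ (minpoly.degree_dvd (IsIntegral.of_finite K γ)) with h | h
  · exact h
  · omega

theorem mem_range_algebraMap_of_mul_self_eq (hdeg : finrank K L = 3) {γ : L} {u v : K}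
    (h : γ * γ = algebraMap K L u + algebraMap K L v * γ) : γ ∈ (algebraMap K L).range := by
  have hp : (X ^ 2 - C v * X - C u : K[X]).natDegree = 2 := by compute_degree!
  refine mem_range_algebraMap_of_aeval_eq_zero (hdeg ▸ Nat.prime_three)
    (p := X ^ 2 - C v * X - C u) (ne_zero_of_natDegree_gt (n := 0) (by omega)) (by omega) ?_
  simp only [map_sub, map_pow, map_mul, aeval_X, aeval_C]
  linear_combination h

theorem AdjoinRoot.nonempty_algEquiv_of_aeval_eq_zero {f : K[X]} (hf : Irreducible f)
    (hdeg : f.natDegree = finrank K L) {ρ : L} (hρ : aeval ρ f = 0) :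
    Nonempty (AdjoinRoot f ≃ₐ[K] L) := by
  have : Fact (Irreducible f) := ⟨hf⟩
  let ψ : AdjoinRoot f →ₐ[K] L := AdjoinRoot.liftAlgHom f (Algebra.ofId K L) ρ hρ
  let pb := AdjoinRoot.powerBasis hf.ne_zero
  have : FiniteDimensional K (AdjoinRoot f) := pb.finite
  have hrank : finrank K (AdjoinRoot f) = finrank K L := by
    rw [pb.finrank, AdjoinRoot.powerBasis_dim, hdeg]
  have : FiniteDimensional K L := Module.finite_of_finrank_pos (hdeg ▸ hf.natDegree_pos)
  have hinj : Function.Injective ψ := ψ.toRingHom.injective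
  exact ⟨.ofBijective ψ ⟨hinj,
    (LinearMap.injective_iff_surjective_of_finrank_eq_finrank hrank (f := ψ.toLinearMap)).mp hinj⟩⟩

end FieldExtension

namespace Module.Basis

section CubicField

variable {K L : Type*} [Field K] [Field L] [Algebra K L] (E : Basis (Fin 3) K L)
  {c : Fin 3 → Fin 3 → Fin 3 → K}

theorem eq_zero_of_algebraMap_add_mul_add_mul_eq_zero (hE : E 0 = 1) {u₀ u₁ u₂ : K}
    (h : algebraMap K L u₀ + algebraMap K L u₁ * E 1 + algebraMap K L u₂ * E 2 = 0) :
    u₀ = 0 ∧ u₁ = 0 ∧ u₂ = 0 := by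
  have hli := Fintype.linearIndependent_iff.mp E.linearIndependent ![u₀, u₁, u₂] (by
    simpa [Fin.sum_univ_three, Algebra.smul_def, hE] using h)
  exact ⟨hli 0, hli 1, hli 2⟩

theorem eq_zero_of_algebraMap_mul_add_mul_mem_range (hE : E 0 = 1) {u₁ u₂ : K}
    (h : algebraMap K L u₁ * E 1 + algebraMap K L u₂ * E 2 ∈ (algebraMap K L).range) :
    u₁ = 0 ∧ u₂ = 0 := by
  obtain ⟨k, hk⟩ := h
  obtain ⟨-, h₁, h₂⟩ :=
    E.eq_zero_of_algebraMap_add_mul_add_mul_eq_zero hE (u₀ := -k) (u₁ := u₁) (u₂ := u₂)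
    (by rw [map_neg, hk]; ring)
  exact ⟨h₁, h₂⟩

theorem mul_eq_algebraMap_add_mul_add_mul (hE : E 0 = 1)
    (hc : ∀ i j, E i * E j = ∑ k, c i j k • E k) (i j : Fin 3) :
    E i * E j = algebraMap K L (c i j 0) + algebraMap K L (c i j 1) * E 1
      + algebraMap K L (c i j 2) * E 2 := by
  rw [hc, Fin.sum_univ_three, hE, Algebra.smul_def, Algebra.smul_def, Algebra.smul_def, mul_one]

theorem structConst_one_one_two_ne_zero (hE : E 0 = 1)
    (hc : ∀ i j, E i * E j = ∑ k, c i j k • E k) : c 1 1 2 ≠ 0 := by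
  intro h0
  have h11 := E.mul_eq_algebraMap_add_mul_add_mul hE hc 1 1
  rw [h0, map_zero, zero_mul, add_zero] at h11
  have hrange :=
    mem_range_algebraMap_of_mul_self_eq (by simpa using Module.finrank_eq_card_basis E) h11
  exact one_ne_zero (E.eq_zero_of_algebraMap_mul_add_mul_mem_range hE (u₁ := 1) (u₂ := 0)
    (by simpa using hrange)).1

theorem eval_indexCubic_ne_zero (hE : E 0 = 1)
    (hc : ∀ i j, E i * E j = ∑ k, c i j k • E k) (x : K) : (indexCubic c).eval x ≠ 0 := by
  intro hx
  have hxL := congrArg (algebraMap K L) hx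
  simp only [indexCubic, eval_sub, eval_add, eval_mul, eval_C, eval_pow, eval_X, eval_ofNat, map_add,
    map_sub, map_mul, map_pow, map_ofNat, map_zero] at hxL
  have h11 := E.mul_eq_algebraMap_add_mul_add_mul hE hc 1 1
  have h12 := E.mul_eq_algebraMap_add_mul_add_mul hE hc 1 2
  have h22 := E.mul_eq_algebraMap_add_mul_add_mul hE hc 2 2
  set φ := algebraMap K L
  have hγ : (φ x * E 1 + E 2) * (φ x * E 1 + E 2)
      = φ (c 1 1 0 * x ^ 2 + 2 * c 1 2 0 * x + c 2 2 0)
        + φ (c 1 1 2 * x ^ 2 + 2 * c 1 2 2 * x + c 2 2 2) * (φ x * E 1 + E 2) := by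
    simp only [map_add, map_mul, map_pow, map_ofNat]
    linear_combination (φ x) ^ 2 * h11 + (2 * φ x) * h12 + h22 - E 1 * hxL
  have hrange :=
    mem_range_algebraMap_of_mul_self_eq (by simpa using Module.finrank_eq_card_basis E) hγ
  exact one_ne_zero (E.eq_zero_of_algebraMap_mul_add_mul_mem_range hE (u₁ := x) (u₂ := 1)
    (by simpa using hrange)).2

theorem irreducible_indexCubic (hE : E 0 = 1) (hc : ∀ i j, E i * E j = ∑ k, c i j k • E k) :
    Irreducible (indexCubic c) := by
  have hdeg := natDegree_indexCubic (E.structConst_one_one_two_ne_zero hE hc)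
  rw [irreducible_iff_roots_eq_zero_of_degree_le_three (by omega) (by omega)]
  exact Multiset.eq_zero_of_forall_notMem fun x hx =>
    E.eval_indexCubic_ne_zero hE hc x (mem_roots'.mp hx).2

theorem structConst_assoc (hE : E 0 = 1) (hc : ∀ i j, E i * E j = ∑ k, c i j k • E k) :
    c 1 1 2 * c 2 2 1 - c 1 2 0 - c 1 2 1 * c 1 2 2 = 0 ∧
      c 1 1 0 + c 1 1 1 * c 1 2 2 + c 1 1 2 * c 2 2 2 - c 1 2 1 * c 1 1 2 - c 1 2 2 ^ 2 = 0 := by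
  have h11 := E.mul_eq_algebraMap_add_mul_add_mul hE hc 1 1
  have h12 := E.mul_eq_algebraMap_add_mul_add_mul hE hc 1 2
  have h22 := E.mul_eq_algebraMap_add_mul_add_mul hE hc 2 2
  obtain ⟨-, h₁, h₂⟩ := E.eq_zero_of_algebraMap_add_mul_add_mul_eq_zero hE
    (u₀ := c 1 1 1 * c 1 2 0 + c 1 1 2 * c 2 2 0 - c 1 2 1 * c 1 1 0 - c 1 2 2 * c 1 2 0)
    (u₁ := c 1 1 2 * c 2 2 1 - c 1 2 0 - c 1 2 1 * c 1 2 2)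
    (u₂ := c 1 1 0 + c 1 1 1 * c 1 2 2 + c 1 1 2 * c 2 2 2 - c 1 2 1 * c 1 1 2 - c 1 2 2 ^ 2) (by
      simp only [map_add, map_sub, map_mul, map_pow]
      linear_combination (algebraMap K L (c 1 2 1) - E 2) * h11
        + (E 1 + algebraMap K L (c 1 2 2) - algebraMap K L (c 1 1 1)) * h12
        - algebraMap K L (c 1 1 2) * h22)
  exact ⟨h₁, h₂⟩

theorem aeval_indexCubic_eq_zero (hE : E 0 = 1) (hc : ∀ i j, E i * E j = ∑ k, c i j k • E k) :
    aeval ((E 1 - algebraMap K L (c 1 2 2)) / algebraMap K L (c 1 1 2)) (indexCubic c) = 0 := by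
  have ha : algebraMap K L (c 1 1 2) ≠ 0 :=
    (_root_.map_ne_zero _).mpr (E.structConst_one_one_two_ne_zero hE hc)
  have h11 := E.mul_eq_algebraMap_add_mul_add_mul hE hc 1 1
  have h12 := E.mul_eq_algebraMap_add_mul_add_mul hE hc 1 2
  obtain ⟨h₁, h₂⟩ := E.structConst_assoc hE hc
  have h₁L := congrArg (algebraMap K L) h₁
  have h₂L := congrArg (algebraMap K L) h₂
  simp only [map_add, map_sub, map_mul, map_pow, map_zero] at h₁L h₂L
  simp only [indexCubic, map_sub, map_add, map_mul, map_pow, aeval_X, aeval_C, map_ofNat]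
  field_simp
  linear_combination (E 1 - algebraMap K L (c 1 2 2)) * h11 + algebraMap K L (c 1 1 2) * h12
    + (E 1 - algebraMap K L (c 1 2 2)) * h₂L - algebraMap K L (c 1 1 2) * h₁L

theorem nonempty_adjoinRoot_indexCubic_algEquiv (hE : E 0 = 1)
    (hc : ∀ i j, E i * E j = ∑ k, c i j k • E k) :
    Nonempty (AdjoinRoot (indexCubic c) ≃ₐ[K] L) :=
  AdjoinRoot.nonempty_algEquiv_of_aeval_eq_zero (E.irreducible_indexCubic hE hc)
    (by rw [natDegree_indexCubic (E.structConst_one_one_two_ne_zero hE hc),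
      Module.finrank_eq_card_basis E, Fintype.card_fin])
    (E.aeval_indexCubic_eq_zero hE hc)

end CubicField

section FractionRing

variable {ι A B K L : Type*} [CommRing A] [CommRing B] [Field K] [Field L]
  [Algebra A B] [Algebra A K] [Algebra B L] [Algebra K L] [Algebra A L]
  [IsScalarTower A K L] [IsScalarTower A B L]

theorem linearIndependent_algebraMap_comp [IsFractionRing A K] (ω : Basis ι A B)
    (hinj : Function.Injective (algebraMap B L)) : LinearIndependent K (algebraMap B L ∘ ω) :=
  (LinearIndependent.iff_fractionRing A K).mp <| ω.linearIndependent.map'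
    (IsScalarTower.toAlgHom A B L).toLinearMap (LinearMap.ker_eq_bot.mpr hinj)

theorem algebraMap_eq_sum_repr [Fintype ι] (ω : Basis ι A B) (x : B) :
    algebraMap B L x = ∑ k, algebraMap A K (ω.repr x k) • algebraMap B L (ω k) := by
  conv_lhs => rw [← ω.sum_repr x]
  simp only [map_sum, Algebra.smul_def, map_mul, ← IsScalarTower.algebraMap_apply]

end FractionRing

end Module.Basis

theorem indexForm_dehomogenized_irreducible_and_adjoinRoot_general
    (A B K L : Type*) [CommRing A]
    [CommRing B]
    [Field K] [Field L]
    [Algebra A B] [Algebra A K] [IsFractionRing A K]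
    [Algebra B L] [IsFractionRing B L]
    [Algebra K L] [Algebra A L] [IsScalarTower A K L] [IsScalarTower A B L]
    (hdeg : Module.finrank K L = 3)
    (ω : Module.Basis (Fin 3) A B) (hω : ω 0 = 1) :
    let c : Fin 3 → Fin 3 → Fin 3 → K :=
      fun i j k => algebraMap A K (ω.repr (ω i * ω j) k)
    let M : Matrix (Fin 3) (Fin 3) (Polynomial K) :=
      !![1, 0, 0;
         0, X, 1;
         C (c 1 1 0) * X ^ 2 + 2 * C (c 1 2 0) * X + C (c 2 2 0),
         C (c 1 1 1) * X ^ 2 + 2 * C (c 1 2 1) * X + C (c 2 2 1),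
         C (c 1 1 2) * X ^ 2 + 2 * C (c 1 2 2) * X + C (c 2 2 2)]
    Irreducible M.det ∧ Nonempty (AdjoinRoot M.det ≃ₐ[K] L) := by
  intro c M
  let E : Basis (Fin 3) K L := basisOfLinearIndependentOfCardEqFinrank
    (ω.linearIndependent_algebraMap_comp (IsFractionRing.injective B L))
    (by rw [Fintype.card_fin, hdeg])
  have hE : E 0 = 1 := by simp [E, hω]
  have hc : ∀ i j, E i * E j = ∑ k, c i j k • E k := fun i j => by
    simp only [E, coe_basisOfLinearIndependentOfCardEqFinrank, Function.comp_apply, ← map_mul]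
    exact ω.algebraMap_eq_sum_repr _
  rw [show M.det = indexCubic c from det_eq_indexCubic c]
  exact ⟨E.irreducible_indexCubic hE hc, E.nonempty_adjoinRoot_indexCubic_algEquiv hE hc⟩

/-- Let `A` be a Dedekind domain with fraction field `K` of characteristic `≠ 3`,
and `B` an integrally closed domain, free of rank 3 over `A`, whose fraction field
`L` is a cubic separable extension of `K`.  For an `A`-basis `{1, ω₂, ω₃}` of `B`,
the dehomogenized index form `I_B(X,1)` (the determinant of the coordinate matrix
of `1, γ, γ²` for `γ = X ω₂ + ω₃`) is irreducible over `K` and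
`K[X]/(I_B(X,1)) ≅ L`. -/
theorem indexForm_dehomogenized_irreducible_and_adjoinRoot
    (A B K L : Type*) [CommRing A] [IsDedekindDomain A]
    [CommRing B] [IsDomain B] [IsIntegrallyClosed B]
    [Field K] [Field L]
    [Algebra A B] [Algebra A K] [IsFractionRing A K]
    [Algebra B L] [IsFractionRing B L]
    [Algebra K L] [Algebra A L] [IsScalarTower A K L] [IsScalarTower A B L]
    (hchar : (3 : K) ≠ 0)
    (hdeg : Module.finrank K L = 3) [Algebra.IsSeparable K L]
    (ω : Module.Basis (Fin 3) A B) (hω : ω 0 = 1) :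
    let c : Fin 3 → Fin 3 → Fin 3 → K :=
      fun i j k => algebraMap A K (ω.repr (ω i * ω j) k)
    let M : Matrix (Fin 3) (Fin 3) (Polynomial K) :=
      !![1, 0, 0;
         0, X, 1;
         C (c 1 1 0) * X ^ 2 + 2 * C (c 1 2 0) * X + C (c 2 2 0),
         C (c 1 1 1) * X ^ 2 + 2 * C (c 1 2 1) * X + C (c 2 2 1),
         C (c 1 1 2) * X ^ 2 + 2 * C (c 1 2 2) * X + C (c 2 2 2)]
    Irreducible M.det ∧ Nonempty (AdjoinRoot M.det ≃ₐ[K] L) :=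
  indexForm_dehomogenized_irreducible_and_adjoinRoot_general A B K L hdeg ω hω
end

section
/- Let L = K(θ) be a cubic separable extension of a field K where θ has monic minimal polynomial f = X³ + aX² + bX + c. Then for the K-basis B = {1, θ, θ²} of L, the index form satisfies I_B(X + aY, Y) = X³ + aX²Y + bXY² + cY³, the homogenization of f. -/
open Polynomial

/-! Reduce `γ ^ 2` with the cubic relation of `θ`. Since `γ ^ 0 = 1`, the determinant of the
coordinate matrix of `1, γ, γ ^ 2` is the `2 × 2` minor of the coordinates of `γ` and `γ ^ 2`
at `θ, θ ^ 2`, and the shift `x ↦ x + a y` makes that minor the homogenized cubic. -/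

section

variable {K L : Type*} [CommRing K] [CommRing L] [Algebra K L]

theorem sq_eq_of_aeval_cubic_eq_zero {θ : L} {a b c : K}
    (hθ : aeval θ (X ^ 3 + C a * X ^ 2 + C b * X + C c) = 0) (x y : K) :
    ((x + a * y) • θ + y • θ ^ 2) ^ 2 =
      (-2 * c * x * y - a * c * y ^ 2) • (1 : L) +
        (-2 * b * x * y - (a * b + c) * y ^ 2) • θ + (x ^ 2 - b * y ^ 2) • θ ^ 2 := by
  simp only [map_add, map_mul, map_pow, aeval_X, aeval_C] at hθ
  simp only [Algebra.smul_def, map_add, map_sub, map_mul, map_neg, map_pow, map_ofNat, mul_one]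
  linear_combination (2 * (algebraMap K L x + algebraMap K L a * algebraMap K L y) *
      algebraMap K L y + algebraMap K L y ^ 2 * θ - algebraMap K L a * algebraMap K L y ^ 2) * hθ

theorem Module.Basis.repr_add_smul_add_smul_sq {β : Module.Basis (Fin 3) K L} {θ : L}
    (hβ : ∀ i : Fin 3, β i = θ ^ (i : ℕ)) (c₀ c₁ c₂ : K) :
    ⇑(β.repr (c₀ • (1 : L) + c₁ • θ + c₂ • θ ^ 2)) = ![c₀, c₁, c₂] := by
  have hsum : c₀ • (1 : L) + c₁ • θ + c₂ • θ ^ 2 = ∑ i, ![c₀, c₁, c₂] i • β i := by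
    simp [Fin.sum_univ_three, hβ]
  rw [hsum, β.repr_sum_self]

end

theorem indexForm_of_power_basis_general (K L : Type*) [Field K] [Field L] [Algebra K L]
    (θ : L) (a b c : K)
    (hmin : minpoly K θ = X ^ 3 + C a * X ^ 2 + C b * X + C c)
    (β : Module.Basis (Fin 3) K L) (hβ : ∀ i : Fin 3, β i = θ ^ (i : ℕ)) :
    ∀ x y : K,
      (Matrix.of fun i j : Fin 3 =>
          β.repr (((x + a * y) • θ + y • θ ^ 2) ^ (i : ℕ)) j).det =
        x ^ 3 + a * x ^ 2 * y + b * x * y ^ 2 + c * y ^ 3 := by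
  intro x y
  have hθ : aeval θ (X ^ 3 + C a * X ^ 2 + C b * X + C c) = 0 := hmin ▸ minpoly.aeval K θ
  set γ := (x + a * y) • θ + y • θ ^ 2
  have row₀ : ⇑(β.repr (γ ^ 0)) = ![1, 0, 0] := by
    rw [pow_zero, ← β.repr_add_smul_add_smul_sq hβ 1 0 0]
    simp
  have row₁ : ⇑(β.repr (γ ^ 1)) = ![0, x + a * y, y] := by
    rw [pow_one, ← β.repr_add_smul_add_smul_sq hβ 0 (x + a * y) y, zero_smul, zero_add]
  have row₂ : ⇑(β.repr (γ ^ 2)) =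
      ![-2 * c * x * y - a * c * y ^ 2, -2 * b * x * y - (a * b + c) * y ^ 2, x ^ 2 - b * y ^ 2] := by
    rw [sq_eq_of_aeval_cubic_eq_zero hθ, β.repr_add_smul_add_smul_sq hβ]
  rw [Matrix.det_fin_three]
  simp only [Matrix.of_apply, Fin.val_zero, Fin.val_one, Fin.val_two]
  rw [row₀, row₁, row₂]
  simp only [Matrix.cons_val_zero, Matrix.cons_val_one, Matrix.cons_val]
  ring

/-- Let `L = K(θ)` be a cubic separable extension of `K` where `θ` has monic minimal
polynomial `f = X³ + aX² + bX + c`.  For the `K`-basis `{1, θ, θ²}` of `L`, the index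
form `I` (given by the determinant of the coordinate matrix of `1, γ, γ²` for
`γ = xθ + yθ²`) satisfies `I(X + aY, Y) = X³ + aX²Y + bXY² + cY³`, the
homogenization of `f`. -/
theorem indexForm_of_power_basis (K L : Type*) [Field K] [Field L] [Algebra K L]
    [Algebra.IsSeparable K L] (hdeg : Module.finrank K L = 3)
    (θ : L) (a b c : K)
    (hmin : minpoly K θ = X ^ 3 + C a * X ^ 2 + C b * X + C c)
    (β : Module.Basis (Fin 3) K L) (hβ : ∀ i : Fin 3, β i = θ ^ (i : ℕ)) :
    ∀ x y : K,
      (Matrix.of fun i j : Fin 3 =>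
          β.repr (((x + a * y) • θ + y • θ ^ 2) ^ (i : ℕ)) j).det =
        x ^ 3 + a * x ^ 2 * y + b * x * y ^ 2 + c * y ^ 3 :=
  indexForm_of_power_basis_general K L θ a b c hmin β hβ
end

section
/- Let K be a field of characteristic ≠ 2,3, A an integrally closed subring of K with fraction field K, B a free cubic A-algebra whose fraction field L is a cubic separable extension of K with disc(L/K) ≠ 0. Then for any A-basis B of B, the projective plane curve C_B : I_B(X,Y) = Z³ is smooth. -/
/-!
For `(u, v) ≠ 0` the element `θ = u ω₂ + v ω₃` lies outside `K`, so it generates the cubic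
extension `L` and `1, θ, θ²` is a `K`-basis of `L`: the index form has no nontrivial zero over
`K`. Hence `I(t, 1)` is a cubic without roots in `K`, so it is irreducible, and separable because
`char K ≠ 3`. At a singular point `∂g/∂Z = -3Z² = 0` forces `Z = 0`, and then `(X : Y)` would be
a multiple root of `I` over the algebraic closure.
-/

open Polynomial Module

namespace Module.Basis

variable {ι K L : Type*} [CommSemiring K] [Semiring L] [Algebra K L]

theorem repr_algebraMap_of_ne (β : Basis ι K L) {i j : ι} (hi : β i = 1) (hji : j ≠ i) (k : K) :
    β.repr (algebraMap K L k) j = 0 := by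
  rw [Algebra.algebraMap_eq_smul_one, ← hi, map_smul, repr_self, Finsupp.smul_single,
    Finsupp.single_eq_of_ne hji]

end Module.Basis

theorem det_repr_pow_ne_zero_of_finrank_prime {K L : Type*} [Field K] [Field L] [Algebra K L]
    {n : ℕ} (β : Basis (Fin n) K L) (hp : (finrank K L).Prime) {θ : L}
    (hθ : θ ∉ (algebraMap K L).range) :
    (Matrix.of fun i j : Fin n => β.repr (θ ^ (i : ℕ)) j).det ≠ 0 := by
  have : FiniteDimensional K L := Module.Finite.of_basis β
  have hint : IsIntegral K θ := .of_finite K θ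
  have hdeg : (minpoly K θ).natDegree = n := by
    rw [← Fintype.card_fin n, ← finrank_eq_card_basis β]
    exact (hp.eq_one_or_self_of_dvd _ (minpoly.degree_dvd hint)).resolve_left
      (mt minpoly.natDegree_eq_one_iff.mp hθ)
  have hli : LinearIndependent K fun i : Fin n => θ ^ (i : ℕ) :=
    hdeg ▸ linearIndependent_pow θ
  refine isUnit_iff_ne_zero.mp ?_
  rw [← Matrix.isUnit_iff_isUnit_det, ← Matrix.linearIndependent_rows_iff_isUnit]
  exact hli.map' β.equivFun.toLinearMap β.equivFun.ker

theorem Polynomial.separable_cubic_of_forall_ne_zero {K : Type*} [Field K] (h3 : (3 : K) ≠ 0)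
    {a b c d : K} (ha : a ≠ 0)
    (hroot : ∀ s, a * s ^ 3 + b * s ^ 2 + c * s + d ≠ 0) :
    (C a * X ^ 3 + C b * X ^ 2 + C c * X + C d).Separable := by
  have hdeg := natDegree_cubic (b := b) (c := c) (d := d) ha
  have hirr : Irreducible (C a * X ^ 3 + C b * X ^ 2 + C c * X + C d) :=
    irreducible_of_degree_le_three_of_not_isRoot (by simp [hdeg]) fun s => by simpa using hroot s
  rw [separable_iff_derivative_ne_zero hirr]
  intro h
  have h2 := congrArg (coeff · 2) h
  norm_num [coeff_derivative, ha, h3] at h2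

theorem binaryCubic_no_singular_zero_of_anisotropic {K F : Type*} [Field K] [Field F]
    [Algebra K F] (h3 : (3 : K) ≠ 0) {a b c d : K}
    (hI : ∀ u v : K, ¬(u = 0 ∧ v = 0) → a * u ^ 3 + b * u ^ 2 * v + c * u * v ^ 2 + d * v ^ 3 ≠ 0)
    {x y : F} (hxy : ¬(x = 0 ∧ y = 0))
    (hI0 : algebraMap K F a * x ^ 3 + algebraMap K F b * x ^ 2 * y
      + algebraMap K F c * x * y ^ 2 + algebraMap K F d * y ^ 3 = 0)
    (hIx : 3 * algebraMap K F a * x ^ 2 + 2 * algebraMap K F b * x * y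
      + algebraMap K F c * y ^ 2 = 0) : False := by
  have ha : a ≠ 0 := by simpa using hI 1 0 (by simp)
  have h3a : 3 * algebraMap K F a ≠ 0 := by
    simpa [← map_ofNat (algebraMap K F), ← map_mul] using mul_ne_zero h3 ha
  have hy : y ≠ 0 := by
    rintro rfl
    exact hxy ⟨by simpa [h3a] using hIx, rfl⟩
  have hsep := separable_cubic_of_forall_ne_zero (b := b) (c := c) (d := d) h3 ha fun s => by
    simpa using hI s 1 (by simp)
  refine hsep.aeval_derivative_ne_zero (x := x / y) ?_ ?_
  · simp only [map_add, map_mul, aeval_C, map_pow, aeval_X]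
    field_simp
    linear_combination hI0
  · simp only [derivative_mul, derivative_C, zero_mul, derivative_X_pow_succ,
      Nat.cast_ofNat, map_add, map_ofNat, map_one, zero_add, Nat.cast_one, pow_one, derivative_X,
      mul_one, add_zero, map_mul, aeval_C, map_pow, aeval_X]
    field_simp
    linear_combination hIx

theorem indexForm_cubic_curve_smooth_general
    (A B K L : Type*) [CommRing A] [CommRing B] [Field K] [Field L]
    [Algebra A B] [Algebra B L] [Algebra K L]
    (h3 : (3 : K) ≠ 0)
    (hdeg : Module.finrank K L = 3)
    (ω : Module.Basis (Fin 3) A B) (hω : ω 0 = 1)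
    (β : Module.Basis (Fin 3) K L) (hβ : ∀ i, β i = algebraMap B L (ω i))
    (a b c d : K)
    (habcd : ∀ x y : K,
      (Matrix.of fun i j : Fin 3 =>
          β.repr ((x • β 1 + y • β 2) ^ (i : ℕ)) j).det =
        a * x ^ 3 + b * x ^ 2 * y + c * x * y ^ 2 + d * y ^ 3) :
    ∀ x y z : AlgebraicClosure K, ¬(x = 0 ∧ y = 0 ∧ z = 0) →
      ¬(algebraMap K (AlgebraicClosure K) a * x ^ 3
            + algebraMap K (AlgebraicClosure K) b * x ^ 2 * y
            + algebraMap K (AlgebraicClosure K) c * x * y ^ 2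
            + algebraMap K (AlgebraicClosure K) d * y ^ 3 - z ^ 3 = 0 ∧
        3 * algebraMap K (AlgebraicClosure K) a * x ^ 2
            + 2 * algebraMap K (AlgebraicClosure K) b * x * y
            + algebraMap K (AlgebraicClosure K) c * y ^ 2 = 0 ∧
        algebraMap K (AlgebraicClosure K) b * x ^ 2
            + 2 * algebraMap K (AlgebraicClosure K) c * x * y
            + 3 * algebraMap K (AlgebraicClosure K) d * y ^ 2 = 0 ∧
        3 * z ^ 2 = 0) := by
  rintro x y z hxyz ⟨hI0, hIx, -, hz⟩
  have hβ0 : β 0 = 1 := by rw [hβ, hω, map_one]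
  have hI : ∀ u v : K, ¬(u = 0 ∧ v = 0) →
      a * u ^ 3 + b * u ^ 2 * v + c * u * v ^ 2 + d * v ^ 3 ≠ 0 := by
    intro u v huv
    rw [← habcd]
    refine det_repr_pow_ne_zero_of_finrank_prime β (hdeg ▸ Nat.prime_three) ?_
    rintro ⟨k, hk⟩
    have hu := β.repr_algebraMap_of_ne hβ0 (j := 1) (by decide) k
    have hv := β.repr_algebraMap_of_ne hβ0 (j := 2) (by decide) k
    exact huv ⟨by simpa [hk] using hu, by simpa [hk] using hv⟩
  have h3' : (3 : AlgebraicClosure K) ≠ 0 := by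
    simpa [← map_ofNat (algebraMap K (AlgebraicClosure K)) 3] using h3
  obtain rfl : z = 0 := by simpa [h3'] using hz
  exact binaryCubic_no_singular_zero_of_anisotropic h3 hI (by simpa using hxyz)
    (by simpa using hI0) hIx

/-- Let `K` be a field of characteristic `≠ 2,3`, `A` an integrally closed
(Dedekind) subring with fraction field `K`, and `B` a free cubic `A`-algebra whose
fraction field `L` is a cubic separable extension of `K` with `disc(L/K) ≠ 0`.
For any `A`-basis `{1, ω₂, ω₃}` of `B`, with index form
`I(X,Y) = aX³ + bX²Y + cXY² + dY³`, the projective plane curve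
`C : I(X,Y) = Z³` is smooth: over an algebraic closure of `K`, the polynomial
`g = I(X,Y) − Z³` and its partial derivatives have no common nontrivial zero. -/
theorem indexForm_cubic_curve_smooth
    (A B K L : Type*) [CommRing A] [IsDedekindDomain A]
    [CommRing B] [IsDomain B] [IsIntegrallyClosed B]
    [Field K] [Field L]
    [Algebra A B] [Algebra A K] [IsFractionRing A K]
    [Algebra B L] [IsFractionRing B L]
    [Algebra K L] [Algebra A L] [IsScalarTower A K L] [IsScalarTower A B L]
    (h2 : (2 : K) ≠ 0) (h3 : (3 : K) ≠ 0)
    (hdeg : Module.finrank K L = 3) [Algebra.IsSeparable K L]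
    (ω : Module.Basis (Fin 3) A B) (hω : ω 0 = 1)
    (β : Module.Basis (Fin 3) K L) (hβ : ∀ i, β i = algebraMap B L (ω i))
    (hdisc : Algebra.discr K ⇑β ≠ 0)
    (a b c d : K)
    (habcd : ∀ x y : K,
      (Matrix.of fun i j : Fin 3 =>
          β.repr ((x • β 1 + y • β 2) ^ (i : ℕ)) j).det =
        a * x ^ 3 + b * x ^ 2 * y + c * x * y ^ 2 + d * y ^ 3) :
    ∀ x y z : AlgebraicClosure K, ¬(x = 0 ∧ y = 0 ∧ z = 0) →
      ¬(algebraMap K (AlgebraicClosure K) a * x ^ 3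
            + algebraMap K (AlgebraicClosure K) b * x ^ 2 * y
            + algebraMap K (AlgebraicClosure K) c * x * y ^ 2
            + algebraMap K (AlgebraicClosure K) d * y ^ 3 - z ^ 3 = 0 ∧
        3 * algebraMap K (AlgebraicClosure K) a * x ^ 2
            + 2 * algebraMap K (AlgebraicClosure K) b * x * y
            + algebraMap K (AlgebraicClosure K) c * y ^ 2 = 0 ∧
        algebraMap K (AlgebraicClosure K) b * x ^ 2
            + 2 * algebraMap K (AlgebraicClosure K) c * x * y
            + 3 * algebraMap K (AlgebraicClosure K) d * y ^ 2 = 0 ∧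
        3 * z ^ 2 = 0) :=
  indexForm_cubic_curve_smooth_general A B K L h3 hdeg ω hω β hβ a b c d habcd
end

section
/- Let D = −3n² with n a positive integer and let P = (x₀, y₀) be a rational point on E^{−27D} : y² = 4x³ − 27D with x₀ ≠ 0 and such that X³ − x₀X² + D is irreducible over ℚ. Then ℚ[X]/(X³ − x₀X² + D) is isomorphic to the pure cubic field ℚ(∛((y₀ − 9n)/(y₀ + 9n))). -/
/-!
Let `θ` be a root of `f = X³ - x₀X² - 3n²`. Modulo `f(θ) = 0` and the curve equation, the element
`u = (n x₀ (9n - y₀) + (-2x₀³ + 3n y₀ - 27n²) θ + 2x₀² θ²) / (2n x₀ y₀)` satisfies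
`u³ = (y₀ - 9n)/(y₀ + 9n)`; here `y₀ ≠ 0` because `f(-x₀/3) = -y₀²/27` and `f` has no rational
root. As `x₀ ≠ 0`, the coefficient of `θ²` does not vanish, so `u ∉ ℚ`; since `[ℚ(θ) : ℚ] = 3`
is prime, `u` generates `ℚ(θ)` and `X³ - (y₀ - 9n)/(y₀ + 9n)` is its minimal polynomial.
-/

open Polynomial

lemma cube_mul_eq_of_curve_point {R : Type*} [CommRing R] {x y n t : R}
    (hE : y ^ 2 = 4 * x ^ 3 + 81 * n ^ 2) (ht : t ^ 3 = x * t ^ 2 + 3 * n ^ 2) :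
    (n * x * (9 * n - y) + (-2 * x ^ 3 + 3 * n * y - 27 * n ^ 2) * t + 2 * x ^ 2 * t ^ 2) ^ 3
        * (y + 9 * n) = (y - 9 * n) * (2 * n * x * y) ^ 3 := by
  linear_combination
    (-177147*n^7 + 39366*y*n^6 + -486*y^3*n^4 + 27*y^4*n^3 + 39366*x^2*n^5*t
      + -4374*x^2*y*n^4*t + -486*x^2*y^2*n^3*t + 54*x^2*y^3*n^2*t + -26244*x^3*n^5
      + 2916*x^3*y*n^4 + 324*x^3*y^2*n^3 + -36*x^3*y^3*n^2 + -2916*x^4*n^3*t^2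
      + 36*x^4*y^2*n*t^2 + 3888*x^5*n^3*t + -48*x^5*y^2*n*t + 72*x^6*n*t^3
      + -756*x^6*n^3 + 8*x^6*y*t^3 + 24*x^6*y*n^2 + 12*x^6*y^2*n + -144*x^7*n*t^2
      + -16*x^7*y*t^2 + 72*x^8*n*t + 8*x^8*y*t) * ht
    + (6561*n^7 + -1458*y*n^6 + 81*y^2*n^5 + -729*x^2*n^5*t + 9*x^2*y^2*n^3*t
      + 567*x^3*n^5 + -18*x^3*y*n^4 + -9*x^3*y^2*n^3 + 54*x^4*n^3*t^2
      + 6*x^4*y*n^2*t^2 + -54*x^5*n^3*t + -6*x^5*y*n^2*t) * hE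

lemma cube_eq_div_of_curve_point {L : Type*} [Field L] {x y n t : L}
    (hE : y ^ 2 = 4 * x ^ 3 + 81 * n ^ 2) (ht : t ^ 3 = x * t ^ 2 + 3 * n ^ 2)
    (hd : 2 * n * x * y ≠ 0) (hy : y + 9 * n ≠ 0) :
    ((n * x * (9 * n - y) + (-2 * x ^ 3 + 3 * n * y - 27 * n ^ 2) * t + 2 * x ^ 2 * t ^ 2)
        / (2 * n * x * y)) ^ 3 = (y - 9 * n) / (y + 9 * n) := by
  rw [div_pow, div_eq_div_iff (pow_ne_zero 3 hd) hy]
  exact cube_mul_eq_of_curve_point hE ht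

lemma AdjoinRoot.coeff_eq_zero_of_add_mul_root_add_mul_root_sq_eq_zero {F : Type*} [Field F]
    {f : F[X]} (hf : 2 < f.natDegree) {a b c : F}
    (h : of f a + of f b * root f + of f c * root f ^ 2 = 0) : c = 0 := by
  set p : F[X] := C a + C b * X + C c * X ^ 2
  have hp : f ∣ p := by
    rw [← mk_eq_zero]
    simpa [p] using h
  have hp0 : p = 0 := eq_zero_of_dvd_of_natDegree_lt hp (by
    have : p.natDegree ≤ 2 := by simp only [p]; compute_degree
    omega)
  simpa [p] using congrArg (coeff · 2) hp0

section PrimeDegree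

variable {F K : Type*} [Field F] [Field K] [Algebra F K] [FiniteDimensional F K]

lemma minpoly.natDegree_eq_finrank_of_prime (hK : (Module.finrank F K).Prime) {u : K}
    (hu : u ∉ (algebraMap F K).range) : (minpoly F u).natDegree = Module.finrank F K :=
  (hK.eq_one_or_self_of_dvd _ (minpoly.degree_dvd (.of_finite F u))).resolve_left
    (mt minpoly.natDegree_eq_one_iff.mp hu)

lemma nonempty_algEquiv_adjoinRoot_of_prime_finrank (hK : (Module.finrank F K).Prime)
    {g : F[X]} (hg : g.Monic) (hdeg : g.natDegree = Module.finrank F K) {u : K}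
    (hgu : aeval u g = 0) (hu : u ∉ (algebraMap F K).range) :
    Nonempty (K ≃ₐ[F] AdjoinRoot g) := by
  have hmin : g = minpoly F u :=
    eq_of_monic_of_dvd_of_natDegree_le (minpoly.monic (.of_finite F u)) hg
      (minpoly.dvd F u hgu) (by rw [hdeg, minpoly.natDegree_eq_finrank_of_prime hK hu])
  have : Fact (Irreducible g) := ⟨hmin ▸ minpoly.irreducible (.of_finite F u)⟩
  have := (AdjoinRoot.powerBasis hg.ne_zero).finite
  let φ := AdjoinRoot.liftAlgHom g (Algebra.ofId F K) u hgu
  have hinj : Function.Injective φ := φ.toRingHom.injective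
  have hsurj : Function.Surjective φ :=
    (LinearMap.injective_iff_surjective_of_finrank_eq_finrank (f := φ.toLinearMap)
      (by rw [← hdeg]; exact finrank_quotient_span_eq_natDegree)).mp hinj
  exact ⟨(AlgEquiv.ofBijective φ ⟨hinj, hsurj⟩).symm⟩

end PrimeDegree

lemma AdjoinRoot.exists_cube_eq_div_notMem_range {F : Type*} [Field F] {n x y : F} {f : F[X]}
    (hf : f = X ^ 3 - C x * X ^ 2 + C (-3 * n ^ 2)) [Fact (Irreducible f)]
    (hE : y ^ 2 = 4 * x ^ 3 + 81 * n ^ 2) (hd : 2 * n * x * y ≠ 0) (hy : y + 9 * n ≠ 0) :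
    ∃ u : AdjoinRoot f, u ^ 3 = of f ((y - 9 * n) / (y + 9 * n)) ∧ u ∉ (of f).range := by
  have hθ : root f ^ 3 = of f x * root f ^ 2 + 3 * of f n ^ 2 := by
    have : mk f (X ^ 3 - C x * X ^ 2 + C (-3 * n ^ 2)) = 0 := mk_eq_zero.2 (dvd_of_eq hf)
    simp only [map_add, map_sub, map_mul, map_pow, map_neg, mk_X, mk_C, map_ofNat] at this
    linear_combination this
  have hE' : of f y ^ 2 = 4 * of f x ^ 3 + 81 * of f n ^ 2 := by
    simpa only [map_add, map_mul, map_pow, map_ofNat] using congrArg (of f) hE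
  have hd' : 2 * of f n * of f x * of f y ≠ 0 := by
    simpa only [map_mul, map_ofNat] using (map_ne_zero (of f)).2 hd
  have hy' : of f y + 9 * of f n ≠ 0 := by
    simpa only [map_add, map_mul, map_ofNat] using (map_ne_zero (of f)).2 hy
  rw [map_div₀, map_sub, map_add, map_mul, map_ofNat]
  refine ⟨_, cube_eq_div_of_curve_point hE' hθ hd' hy', ?_⟩
  rintro ⟨s, hs⟩
  rw [eq_div_iff hd'] at hs
  have hf3 : f.natDegree = 3 := by rw [hf]; compute_degree!
  have hc : 2 * x ^ 2 = 0 := by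
    refine coeff_eq_zero_of_add_mul_root_add_mul_root_sq_eq_zero (f := f) (by omega)
      (a := n * x * (9 * n - y) - s * (2 * n * x * y))
      (b := -2 * x ^ 3 + 3 * n * y - 27 * n ^ 2) ?_
    simp only [map_sub, map_mul, map_add, map_neg, map_pow, map_ofNat]
    linear_combination -hs
  exact hd (pow_eq_zero_iff two_ne_zero |>.1 (by linear_combination 2 * n ^ 2 * y ^ 2 * hc))

/-- Let `D = −3n²` with `n` a positive integer, and let `P = (x₀, y₀)` be a rational
point on `E^{−27D} : y² = 4x³ − 27D = 4x³ + 81n²` with `x₀ ≠ 0`, such that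
`X³ − x₀X² + D` is irreducible over `ℚ`.  Then `ℚ[X]/(X³ − x₀X² + D)` is isomorphic
to the pure cubic field `ℚ(∛((y₀ − 9n)/(y₀ + 9n)))`. -/
theorem LP_isomorphic_pure_cubic (n : ℕ) (hn : 0 < n) (x₀ y₀ : ℚ)
    (hE : y₀ ^ 2 = 4 * x₀ ^ 3 + 81 * (n : ℚ) ^ 2) (hx₀ : x₀ ≠ 0)
    (hirr : Irreducible (X ^ 3 - C x₀ * X ^ 2 + C (-3 * (n : ℚ) ^ 2))) :
    Nonempty
      (AdjoinRoot (X ^ 3 - C x₀ * X ^ 2 + C (-3 * (n : ℚ) ^ 2)) ≃ₐ[ℚ]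
        AdjoinRoot (X ^ 3 - C ((y₀ - 9 * n) / (y₀ + 9 * n)))) := by
  set f : ℚ[X] := X ^ 3 - C x₀ * X ^ 2 + C (-3 * (n : ℚ) ^ 2)
  have : Fact (Irreducible f) := ⟨hirr⟩
  have hf : f.natDegree = 3 := by simp only [f]; compute_degree!
  have hy₀ : y₀ ≠ 0 := by
    rintro rfl
    refine hirr.not_isRoot_of_natDegree_ne_one (by omega) (x := -x₀ / 3) ?_
    simp only [f, IsRoot, eval_add, eval_sub, eval_mul, eval_pow, eval_X, eval_C]
    linear_combination hE / 27
  have hadd : y₀ + 9 * n ≠ 0 := fun h =>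
    pow_ne_zero 3 hx₀ (by linear_combination (h * (y₀ - 9 * n) - hE) / 4)
  obtain ⟨u, hu, hu_irr⟩ := AdjoinRoot.exists_cube_eq_div_notMem_range rfl hE (by positivity) hadd
  have hK : Module.finrank ℚ (AdjoinRoot f) = 3 := finrank_quotient_span_eq_natDegree.trans hf
  refine nonempty_algEquiv_adjoinRoot_of_prime_finrank (hK ▸ Nat.prime_three)
    (monic_X_pow_sub_C _ three_ne_zero) (by rw [natDegree_X_pow_sub_C, hK]) ?_ hu_irr
  simp [hu]
end

section
/- Let n be a positive integer, D = −3n², and (x₀, y₀) a rational point on y² = 4x³ + 81n² with x₀ ≠ 0. Write m for the unique cube-free positive integer with m ≡ |(y₀ − 9n)/(y₀ + 9n)| in ℚ^×/(ℚ^×)³. Then every prime factor of m other than 3 divides n. -/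
/-!
Put `a = y₀ - 9n` and `b = y₀ + 9n`. Then `a * b = 4 x₀³` and `b - a = 18n`, so for `v = v_p` with
`p ≠ 3`, `p ∤ n` we get `v (b - a) = v 2`. Ultrametrically, if `v a ≠ v b` then
`min (v a) (v b) = v (b - a) = v 2`, so the other valuation is `v 2 + 3 v x₀`; in every case
`v a ≡ v b (mod 3)`.
-/

namespace padicValRat

variable {p : ℕ} [Fact p.Prime]

theorem sub_eq_min {a b : ℚ} (ha : a ≠ 0) (hb : b ≠ 0) (hval : padicValRat p a ≠ padicValRat p b) :
    padicValRat p (b - a) = min (padicValRat p a) (padicValRat p b) := by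
  have hba : b + -a ≠ 0 := fun h => hval (by rw [show a = b by linarith])
  rw [sub_eq_add_neg, add_eq_min hba hb (neg_ne_zero.mpr ha) (by rwa [padicValRat.neg, ne_comm]),
    padicValRat.neg, min_comm]

theorem dvd_sub_of_add_eq {a b : ℚ} {m k : ℤ} (ha : a ≠ 0) (hb : b ≠ 0)
    (h : padicValRat p a + padicValRat p b = 2 * padicValRat p (b - a) + m * k) :
    m ∣ padicValRat p a - padicValRat p b := by
  by_cases hval : padicValRat p a = padicValRat p b
  · simp [hval]
  rw [sub_eq_min ha hb hval] at h
  rcases min_cases (padicValRat p a) (padicValRat p b) with ⟨hmin, -⟩ | ⟨hmin, -⟩ <;>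
    rw [hmin] at h
  · exact ⟨-k, by linarith⟩
  · exact ⟨k, by linarith⟩

end padicValRat

section

variable {p : ℕ} [Fact p.Prime]

theorem padicValRat_eighteen_mul {n : ℕ} (hp3 : p ≠ 3) (hpn : ¬p ∣ n) :
    padicValRat p (18 * n) = padicValRat p 2 := by
  have hn : n ≠ 0 := by rintro rfl; exact hpn (dvd_zero p)
  have hp_not_dvd_nine_n : ¬p ∣ 9 * n := by
    intro h
    rcases (Nat.Prime.dvd_mul Fact.out).mp h with h9 | hn'
    · exact hp3 ((Nat.prime_dvd_prime_iff_eq Fact.out Nat.prime_three).mp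
        (Nat.Prime.dvd_of_dvd_pow Fact.out (show p ∣ 3 ^ 2 from h9)))
    · exact hpn hn'
  have hv : padicValRat p ((9 * n : ℕ) : ℚ) = 0 := by
    rw [padicValRat.of_nat, padicValNat.eq_zero_of_not_dvd hp_not_dvd_nine_n, Nat.cast_zero]
  rw [show (18 * n : ℚ) = 2 * ((9 * n : ℕ) : ℚ) by push_cast; ring,
    padicValRat.mul two_ne_zero (by positivity), hv, add_zero]

theorem padicValRat_four_mul_pow_three {x : ℚ} (hx : x ≠ 0) :
    padicValRat p (4 * x ^ 3) = 2 * padicValRat p 2 + 3 * padicValRat p x := by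
  rw [padicValRat.mul four_ne_zero (pow_ne_zero 3 hx), padicValRat.pow x,
    show (4 : ℚ) = 2 ^ 2 by norm_num, padicValRat.pow 2]
  push_cast
  ring

end

theorem prime_factors_divide_n_general (n : ℕ) (x₀ y₀ : ℚ)
    (hE : y₀ ^ 2 = 4 * x₀ ^ 3 + 81 * (n : ℚ) ^ 2) (hx₀ : x₀ ≠ 0) :
    ∀ p : ℕ, p.Prime → p ≠ 3 → ¬(p ∣ n) →
      (3 : ℤ) ∣ padicValRat p ((y₀ - 9 * n) / (y₀ + 9 * n)) := by
  intro p hp hp3 hpn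
  have : Fact p.Prime := ⟨hp⟩
  have hprod : (y₀ - 9 * n) * (y₀ + 9 * n) = 4 * x₀ ^ 3 := by linear_combination hE
  have hprod_ne : (y₀ - 9 * n) * (y₀ + 9 * n) ≠ 0 := by rw [hprod]; positivity
  obtain ⟨ha, hb⟩ := mul_ne_zero_iff.mp hprod_ne
  rw [padicValRat.div ha hb]
  refine padicValRat.dvd_sub_of_add_eq (k := padicValRat p x₀) ha hb ?_
  rw [← padicValRat.mul ha hb, hprod, show y₀ + 9 * n - (y₀ - 9 * n) = 18 * (n : ℚ) by ring,
    padicValRat_eighteen_mul hp3 hpn, padicValRat_four_mul_pow_three hx₀]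

/-- Let `n` be a positive integer, `D = −3n²`, and `(x₀, y₀)` a rational point on
`y² = 4x³ + 81n²` with `x₀ ≠ 0`.  Then, for every prime `p ≠ 3` not dividing `n`,
the `p`-adic valuation of `(y₀ − 9n)/(y₀ + 9n)` is divisible by 3; i.e. every prime
factor other than 3 of the cube-free representative `m` of
`(y₀ − 9n)/(y₀ + 9n)` in `ℚ^×/(ℚ^×)³` divides `n`. -/
theorem prime_factors_divide_n (n : ℕ) (hn : 0 < n) (x₀ y₀ : ℚ)
    (hE : y₀ ^ 2 = 4 * x₀ ^ 3 + 81 * (n : ℚ) ^ 2) (hx₀ : x₀ ≠ 0) :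
    ∀ p : ℕ, p.Prime → p ≠ 3 → ¬(p ∣ n) →
      (3 : ℤ) ∣ padicValRat p ((y₀ - 9 * n) / (y₀ + 9 * n)) :=
  prime_factors_divide_n_general n x₀ y₀ hE hx₀
end

section
/- Let p be a prime with p ≠ 3, let n be a positive integer with p ∤ n, and let (x₀, y₀) ∈ ℚ² satisfy y₀² = 4x₀³ + 81n² with x₀ ≠ 0 and y₀ ≠ ±9n. Then v_p(y₀ − 9n) − v_p(y₀ + 9n) ≡ 0 (mod 3), where v_p is the p-adic valuation. -/
/-- Let `p ≠ 3` be a prime, `n` a positive integer with `p ∤ n`, and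
`(x₀, y₀) ∈ ℚ²` with `y₀² = 4x₀³ + 81n²`, `x₀ ≠ 0` and `y₀ ≠ ±9n`.  Then
`v_p(y₀ − 9n) − v_p(y₀ + 9n) ≡ 0 (mod 3)` for the `p`-adic valuation `v_p`. -/
theorem valuation_difference_mod_three (p : ℕ) (hp : p.Prime) (hp3 : p ≠ 3)
    (n : ℕ) (hn : 0 < n) (hpn : ¬(p ∣ n)) (x₀ y₀ : ℚ)
    (hE : y₀ ^ 2 = 4 * x₀ ^ 3 + 81 * (n : ℚ) ^ 2) (hx₀ : x₀ ≠ 0)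
    (hy1 : y₀ ≠ 9 * n) (hy2 : y₀ ≠ -(9 * n)) :
    (3 : ℤ) ∣ (padicValRat p (y₀ - 9 * n) - padicValRat p (y₀ + 9 * n)) := by
  haveI : Fact p.Prime := ⟨hp⟩
  set a : ℚ := y₀ - 9 * n with ha_def
  set b : ℚ := y₀ + 9 * n with hb_def
  have ha : a ≠ 0 := sub_ne_zero.mpr hy1
  have hb : b ≠ 0 := by
    intro h
    apply hy2
    have : y₀ = -(9 * n) := by rw [hb_def] at h; linarith
    exact this
  have hab : a * b = 4 * x₀ ^ 3 := by
    rw [ha_def, hb_def]; ring_nf; nlinarith [hE]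
  have h2 : (2 : ℚ) ≠ 0 := two_ne_zero
  have hsum : padicValRat p a + padicValRat p b
      = 2 * padicValRat p 2 + 3 * padicValRat p x₀ := by
    have : padicValRat p (a * b) = padicValRat p ((2 * 2) * (x₀ * x₀ * x₀)) := by
      rw [hab]; norm_num; ring_nf
    rw [padicValRat.mul ha hb] at this
    rw [this, padicValRat.mul (by norm_num) (by positivity),
        padicValRat.mul h2 h2,
        padicValRat.mul (mul_ne_zero hx₀ hx₀) hx₀,
        padicValRat.mul hx₀ hx₀]
    ring
  have h9n : ¬ p ∣ 9 * n := by
    rintro h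
    rcases (Nat.Prime.dvd_mul hp).mp h with h9 | hn'
    · have h3 : p ∣ 3 := hp.dvd_of_dvd_pow (n := 2) (by norm_num at h9 ⊢; exact h9)
      exact hp3 ((Nat.prime_dvd_prime_iff_eq hp (by norm_num)).mp h3)
    · exact hpn hn'
  have hv18 : padicValRat p ((18 * n : ℕ) : ℚ) = padicValRat p 2 := by
    have h18 : (18 * n : ℕ) = 2 * (9 * n) := by ring
    have hnn : ((9 * n : ℕ) : ℚ) ≠ 0 := by positivity
    rw [h18]
    push_cast
    rw [padicValRat.mul h2 (by positivity)]
    have : padicValRat p ((9 * n : ℕ) : ℚ) = 0 := by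
      rw [padicValRat.of_nat, padicValNat.eq_zero_of_not_dvd h9n]
      simp
    push_cast at this
    rw [this, add_zero]
  have hba : b + (-a) = ((18 * n : ℕ) : ℚ) := by
    rw [ha_def, hb_def]; push_cast; ring
  by_cases heq : padicValRat p a = padicValRat p b
  · rw [heq]; simp
  · have hmin : min (padicValRat p b) (padicValRat p a) = padicValRat p 2 := by
      have hne : padicValRat p b ≠ padicValRat p (-a) := by
        rw [padicValRat.neg]; exact fun h => heq h.symm
      have := padicValRat.add_eq_min (p := p) (q := b) (r := -a)
        (by rw [hba]; positivity) hb (neg_ne_zero.mpr ha) hne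
      rw [hba, hv18, padicValRat.neg] at this
      exact this.symm
    rcases le_total (padicValRat p b) (padicValRat p a) with h | h
    · rw [min_eq_left h] at hmin
      have : padicValRat p a - padicValRat p b = 3 * padicValRat p x₀ := by
        rw [hmin]; linarith [hsum]
      rw [this]; exact ⟨padicValRat p x₀, rfl⟩
    · rw [min_eq_right h] at hmin
      have : padicValRat p a - padicValRat p b = -(3 * padicValRat p x₀) := by
        rw [← hmin] at hsum; linarith [hsum]
      rw [this]; exact ⟨-padicValRat p x₀, by ring⟩
end

section
/- Let L be a cubic number field whose discriminant equals −3n² for some integer n. Then L is a pure cubic field, i.e., L = ℚ(∛m) for some cube-free integer m. -/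
/-!
The discriminant of the power basis of a primitive element `θ` is the square of the Vandermonde
product `D` of its conjugates `θ₀, θ₁, θ₂`, and differs from `disc L` by a nonzero rational
square; hence `D² = -3N²` with `N ∈ ℚˣ`, so `s = D / N` is a square root of `-3` with `s D`
rational. With `ω = (-1 + s) / 2`, the Lagrange resolvents `u = θ₀ + ω θ₁ + ω² θ₂` and
`v = θ₀ + ω² θ₁ + ω θ₂` have rational cubes and rational product, while `u + v = 3θ₀ - tr θ`
generates the embedded copy of `L`. Since `v = uv / u`, that copy lies in `ℚ(u)`, which has
degree at most `3`, so `u` (or `v`, if `u` is rational) comes from a non-rational element of `L`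
with rational cube. A rational multiple of it has a cube-free integer as cube, and generates `L`
because `[L : ℚ] = 3` is prime.
-/

open Module IntermediateField

theorem exists_eq_mul_pow_of_ne_zero {α : Type*} [CommMonoidWithZero α] [IsCancelMulZero α]
    [WfDvdMonoid α] {k : ℕ} (hk : k ≠ 0) {N : α} (hN : N ≠ 0) :
    ∃ m c : α, c ≠ 0 ∧ N = m * c ^ k ∧ ∀ p : α, Prime p → ¬p ^ k ∣ m := by
  induction N using (wellFounded_dvdNotUnit (α := α)).induction with
  | _ N ih =>
  by_cases h : ∃ p : α, Prime p ∧ p ^ k ∣ N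
  · obtain ⟨p, hp, d, rfl⟩ := h
    have hd : d ≠ 0 := right_ne_zero_of_mul hN
    have hdN : DvdNotUnit d (p ^ k * d) :=
      ⟨hd, p ^ k, fun hu => hp.not_isUnit ((isUnit_pow_iff hk).mp hu), mul_comm _ _⟩
    obtain ⟨m, c, hc, rfl, hm⟩ := ih d hdN hd
    exact ⟨m, p * c, mul_ne_zero hp.ne_zero hc, by rw [mul_pow]; ac_rfl, hm⟩
  · push Not at h
    have : Nontrivial α := ⟨N, 0, hN⟩
    exact ⟨N, 1, one_ne_zero, by rw [one_pow, mul_one], h⟩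

theorem Rat.exists_pow_mul_eq_intCast {k : ℕ} (hk : k ≠ 0) {r : ℚ} (hr : r ≠ 0) :
    ∃ m : ℤ, (∀ p : ℤ, Prime p → ¬p ^ k ∣ m) ∧ ∃ q : ℚ, q ≠ 0 ∧ q ^ k * r = m := by
  have hden : (r.den : ℚ) ≠ 0 := by exact_mod_cast r.den_ne_zero
  obtain ⟨m, c, hc, hN, hm⟩ := exists_eq_mul_pow_of_ne_zero hk
    (mul_ne_zero (Rat.num_ne_zero.mpr hr)
      (pow_ne_zero (k - 1) (Int.natCast_ne_zero.mpr r.den_ne_zero)))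
  refine ⟨m, hm, r.den / c, div_ne_zero hden (Int.cast_ne_zero.mpr hc), ?_⟩
  have hN' : (r.den : ℚ) ^ k * r = m * (c : ℚ) ^ k := by
    rw [← pow_sub_one_mul hk, mul_assoc, Rat.den_mul_eq_num, mul_comm]
    exact_mod_cast hN
  rw [div_pow, div_mul_eq_mul_div, hN', mul_div_assoc,
    div_self (pow_ne_zero k (Int.cast_ne_zero.mpr hc)), mul_one]

namespace IntermediateField

variable {F E : Type*} [Field F] [Field E] [Algebra F E]

theorem adjoin_simple_eq_top_of_finrank_prime (hp : (finrank F E).Prime) {α : E}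
    (hα : α ∉ (⊥ : IntermediateField F E)) : F⟮α⟯ = ⊤ :=
  haveI := isSimpleOrder_of_finrank_prime F E hp
  (eq_bot_or_eq_top F⟮α⟯).resolve_left (by rwa [adjoin_simple_eq_bot_iff])

theorem mem_of_le_adjoin_simple_of_pow_eq {K : IntermediateField F E} [FiniteDimensional F K]
    {u : E} {r : F} (hu : u ^ finrank F K = algebraMap F E r) (hK : K ≤ F⟮u⟯) : u ∈ K := by
  have hk : finrank F K ≠ 0 := finrank_pos.ne'
  have hroot : Polynomial.aeval u (Polynomial.X ^ finrank F K - Polynomial.C r) = 0 := by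
    simp [hu]
  have hmonic := Polynomial.monic_X_pow_sub_C r hk
  have hint : IsIntegral F u := ⟨_, hmonic, by simpa using hroot⟩
  have := adjoin.finiteDimensional hint
  have hdeg : finrank F F⟮u⟯ ≤ finrank F K := by
    rw [adjoin.finrank hint]
    simpa [Polynomial.natDegree_X_pow_sub_C] using
      Polynomial.natDegree_le_of_dvd (minpoly.dvd F u hroot) hmonic.ne_zero
  exact eq_of_le_of_finrank_le hK hdeg ▸ mem_adjoin_simple_self F u

end IntermediateField

theorem exists_pow_three_eq_algebraMap_of_resolvents {F L E : Type*} [Field F] [Field L] [Field E]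
    [Algebra F L] [Algebra F E] (hL : finrank F L = 3) (σ : L →ₐ[F] E) {w : L}
    (hw : w ∉ (⊥ : IntermediateField F L)) {u v : E} {A B C : F}
    (hu : u ^ 3 = algebraMap F E A) (hv : v ^ 3 = algebraMap F E B)
    (huv : u * v = algebraMap F E C) (hsum : u + v = σ w) :
    ∃ x : L, x ∉ (⊥ : IntermediateField F L) ∧ ∃ r : F, x ^ 3 = algebraMap F L r := by
  have pullback {x : L} {r : F} (hx : σ x ^ 3 = algebraMap F E r) : x ^ 3 = algebraMap F L r :=
    σ.toRingHom.injective (by simpa using hx)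
  by_cases hu_bot : u ∈ (⊥ : IntermediateField F E)
  · obtain ⟨q, rfl⟩ := mem_bot.mp hu_bot
    refine ⟨w - algebraMap F L q, fun h => hw ?_, B, pullback ?_⟩
    · simpa using add_mem h (IntermediateField.algebraMap_mem _ q)
    · rw [map_sub, σ.commutes, ← hsum, add_sub_cancel_left, hv]
  · have hu0 : u ≠ 0 := fun h => hu_bot (h ▸ zero_mem _)
    have hrange : finrank F σ.fieldRange = 3 :=
      hL ▸ (AlgEquiv.ofInjectiveField σ).toLinearEquiv.finrank_eq.symm
    have := FiniteDimensional.of_finrank_pos (hrange ▸ Nat.succ_pos 2 :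
      0 < finrank F σ.fieldRange)
    have hσw : σ.fieldRange = F⟮σ w⟯ := by
      rw [AlgHom.fieldRange_eq_map, ← adjoin_simple_eq_top_of_finrank_prime
        (hL ▸ Nat.prime_three) hw, adjoin_map, Set.image_singleton]
    have hle : σ.fieldRange ≤ F⟮u⟯ := by
      rw [hσw, adjoin_simple_le_iff, ← hsum,
        eq_div_of_mul_eq (a := v) hu0 (by rw [mul_comm, huv])]
      exact add_mem (mem_adjoin_simple_self F u)
        (div_mem (IntermediateField.algebraMap_mem _ C) (mem_adjoin_simple_self F u))
    obtain ⟨x, rfl⟩ := mem_of_le_adjoin_simple_of_pow_eq (hrange ▸ hu) hle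
    refine ⟨x, fun h => hu_bot ?_, A, pullback hu⟩
    obtain ⟨q, rfl⟩ := mem_bot.mp h
    exact mem_bot.mpr ⟨q, (σ.commutes q).symm⟩

section LagrangeResolvent

variable {K : Type*} [Field K] [CharZero K] (s t₀ t₁ t₂ : K)

/-- For `s ^ 2 = -3`, `ω = (-1 + s) / 2` is a primitive cube root of unity and this is
`t₀ + ω t₁ + ω² t₂`; replacing `s` by `-s` swaps `ω` and `ω²`. -/
def lagrangeResolvent : K := t₀ + (-1 + s) / 2 * t₁ + (-1 - s) / 2 * t₂

theorem lagrangeResolvent_add_neg :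
    lagrangeResolvent s t₀ t₁ t₂ + lagrangeResolvent (-s) t₀ t₁ t₂ = 3 * t₀ - (t₀ + t₁ + t₂) := by
  unfold lagrangeResolvent; ring

variable {s}

theorem lagrangeResolvent_mul_neg (hs : s ^ 2 = -3) :
    lagrangeResolvent s t₀ t₁ t₂ * lagrangeResolvent (-s) t₀ t₁ t₂ =
      (3 * (t₀ ^ 2 + t₁ ^ 2 + t₂ ^ 2) - (t₀ + t₁ + t₂) ^ 2) / 2 := by
  unfold lagrangeResolvent
  linear_combination (-((t₁ - t₂) / 2) ^ 2) * hs

theorem lagrangeResolvent_pow_three (hs : s ^ 2 = -3) :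
    lagrangeResolvent s t₀ t₁ t₂ ^ 3 =
      -5 / 4 * (t₀ + t₁ + t₂) ^ 3 + 9 / 4 * (t₀ + t₁ + t₂) * (t₀ ^ 2 + t₁ ^ 2 + t₂ ^ 2)
        + 27 / 2 * (t₀ * t₁ * t₂) - 3 / 2 * (s * ((t₁ - t₀) * (t₂ - t₀) * (t₂ - t₁))) := by
  unfold lagrangeResolvent
  linear_combination
    (3 * (t₀ - (t₁ + t₂) / 2) * ((t₁ - t₂) / 2) ^ 2 + s * ((t₁ - t₂) / 2) ^ 3) * hs

end LagrangeResolvent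

theorem NumberField.exists_discr_eq_sq_mul_discr {K : Type*} [Field K] [NumberField K]
    {ι : Type*} [Fintype ι] [DecidableEq ι] (b : Basis ι ℚ K) :
    ∃ c : ℚ, c ≠ 0 ∧ Algebra.discr ℚ b = c ^ 2 * discr K := by
  let ib := (integralBasis K).reindex ((integralBasis K).indexEquiv b)
  refine ⟨ib.det b, (ib.isUnit_det b).ne_zero, ?_⟩
  conv_lhs => rw [← ib.toMatrix_map_vecMul b]
  rw [Algebra.discr_of_matrix_vecMul, coe_discr, Basis.coe_reindex, Algebra.discr_reindex,
    Basis.det_apply]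

theorem Algebra.algebraMap_discr_eq_sq_of_fin_three {K L E : Type*} [Field K] [Field L] [Field E]
    [Algebra K L] [Algebra K E] [IsAlgClosed E] [Algebra.IsSeparable K L]
    (b : Basis (Fin 3) K L) {θ : L} (hb : ∀ i, b i = θ ^ (i : ℕ)) (e : Fin 3 ≃ (L →ₐ[K] E)) :
    algebraMap K E (discr K b) =
      ((e 1 θ - e 0 θ) * (e 2 θ - e 0 θ) * (e 2 θ - e 1 θ)) ^ 2 := by
  have := Module.Finite.of_basis b
  rw [discr_eq_det_embeddingsMatrixReindex_pow_two K E b e, Matrix.det_fin_three]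
  simp only [embeddingsMatrixReindex, embeddingsMatrix, Matrix.reindex_apply,
    Matrix.submatrix_apply, Matrix.of_apply, Equiv.symm_symm, Equiv.refl_symm, Equiv.coe_refl,
    id_eq, hb, map_pow, Fin.val_zero, Fin.val_one, Fin.val_two]
  ring

theorem exists_pow_three_eq_algebraMap_of_sq_eq_neg_three {F L E : Type*} [Field F] [Field L]
    [Field E] [Algebra F L] [Algebra F E] [IsAlgClosed E] [CharZero E] [Algebra.IsSeparable F L]
    (hL : finrank F L = 3) (e : Fin 3 ≃ (L →ₐ[F] E)) {θ : L}
    (hθ : θ ∉ (⊥ : IntermediateField F L)) {s : E} (hs : s ^ 2 = -3) {N : F}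
    (hsD : s * ((e 1 θ - e 0 θ) * (e 2 θ - e 0 θ) * (e 2 θ - e 1 θ)) = algebraMap F E N) :
    ∃ x : L, x ∉ (⊥ : IntermediateField F L) ∧ ∃ r : F, x ^ 3 = algebraMap F L r := by
  have := Module.finite_of_finrank_eq_succ hL
  have sum_embeddings (x : L) : e 0 x + e 1 x + e 2 x = algebraMap F E (Algebra.trace F L x) := by
    rw [trace_eq_sum_embeddings E, ← e.sum_comp, Fin.sum_univ_three]
  have ha := sum_embeddings θ
  have hb := sum_embeddings (θ ^ 2)
  have hc : e 0 θ * e 1 θ * e 2 θ = algebraMap F E (Algebra.norm F θ) := by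
    rw [Algebra.norm_eq_prod_embeddings F E, ← e.prod_comp, Fin.prod_univ_three]
  simp only [map_pow] at hb
  set a := Algebra.trace F L θ
  set b := Algebra.trace F L (θ ^ 2)
  set c := Algebra.norm F θ
  refine exists_pow_three_eq_algebraMap_of_resolvents hL (e 0)
    (w := 3 * θ - algebraMap F L a) (u := lagrangeResolvent s (e 0 θ) (e 1 θ) (e 2 θ))
    (v := lagrangeResolvent (-s) (e 0 θ) (e 1 θ) (e 2 θ))
    (A := -5 / 4 * a ^ 3 + 9 / 4 * a * b + 27 / 2 * c - 3 / 2 * N)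
    (B := -5 / 4 * a ^ 3 + 9 / 4 * a * b + 27 / 2 * c - 3 / 2 * -N)
    (C := (3 * b - a ^ 2) / 2) ?_ ?_ ?_ ?_ ?_
  · have := (e 0).toRingHom.charZero
    intro hw
    obtain ⟨q, hq⟩ := mem_bot.mp hw
    refine hθ (mem_bot.mpr ⟨(q + a) / 3, ?_⟩)
    rw [map_div₀, map_add, hq, map_ofNat]
    field_simp
    ring
  · rw [lagrangeResolvent_pow_three _ _ _ hs, ha, hb, hc, hsD]
    simp only [map_add, map_sub, map_mul, map_div₀, map_pow, map_ofNat, map_neg]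
  · rw [lagrangeResolvent_pow_three _ _ _ (by rwa [neg_sq]), neg_mul, hsD, ha, hb, hc]
    simp only [map_add, map_sub, map_mul, map_div₀, map_pow, map_ofNat, map_neg]
  · rw [lagrangeResolvent_mul_neg _ _ _ hs, ha, hb]
    simp only [map_sub, map_mul, map_div₀, map_pow, map_ofNat]
  · rw [lagrangeResolvent_add_neg, ha, map_sub, map_mul, map_ofNat, AlgHom.commutes]

namespace NumberField

variable {K : Type*} [Field K] [NumberField K]

theorem exists_sq_eq_neg_three_mul_vandermonde_eq_algebraMap {E : Type*} [Field E] [Algebra ℚ E]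
    [IsAlgClosed E] {n : ℤ} (hdisc : discr K = -3 * n ^ 2) (b : Basis (Fin 3) ℚ K) {θ : K}
    (hb : ∀ i, b i = θ ^ (i : ℕ)) (e : Fin 3 ≃ (K →ₐ[ℚ] E)) :
    ∃ s : E, s ^ 2 = -3 ∧ ∃ N : ℚ,
      s * ((e 1 θ - e 0 θ) * (e 2 θ - e 0 θ) * (e 2 θ - e 1 θ)) = algebraMap ℚ E N := by
  obtain ⟨c, hc, hbc⟩ := exists_discr_eq_sq_mul_discr b
  have hn : n ≠ 0 := by
    rintro rfl
    exact discr_ne_zero K (by simpa using hdisc)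
  set D := (e 1 θ - e 0 θ) * (e 2 θ - e 0 θ) * (e 2 θ - e 1 θ)
  have hD : D ^ 2 = -3 * algebraMap ℚ E (n * c) ^ 2 := by
    rw [← map_pow, ← map_ofNat (algebraMap ℚ E), ← map_neg, ← map_mul,
      ← Algebra.algebraMap_discr_eq_sq_of_fin_three b hb e, hbc, hdisc]
    push_cast
    ring
  have hN : algebraMap ℚ E (n * c) ≠ 0 :=
    (map_ne_zero _).mpr (mul_ne_zero (Int.cast_ne_zero.mpr hn) hc)
  refine ⟨D / algebraMap ℚ E (n * c), ?_, -3 * (n * c), ?_⟩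
  · rw [div_pow, hD]
    field_simp
  · rw [div_mul_eq_mul_div, ← sq, hD, map_mul (algebraMap ℚ E) (-3), map_neg, map_ofNat]
    field_simp

theorem exists_pow_three_eq_algebraMap_of_discr_eq (hK : finrank ℚ K = 3) {n : ℤ}
    (hdisc : discr K = -3 * n ^ 2) :
    ∃ x : K, x ∉ (⊥ : IntermediateField ℚ K) ∧ ∃ r : ℚ, x ^ 3 = algebraMap ℚ K r := by
  let pb := Field.powerBasisOfFiniteOfSeparable ℚ K
  have hdim : pb.dim = 3 := pb.finrank ▸ hK
  have hθ : pb.gen ∉ (⊥ : IntermediateField ℚ K) := by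
    intro h
    have htop : ℚ⟮pb.gen⟯ = ⊤ :=
      (adjoin_simple_eq_top_iff_of_isAlgebraic (Algebra.IsAlgebraic.isAlgebraic _)).mpr
        pb.adjoin_gen_eq_top
    rw [adjoin_simple_eq_bot_iff.mpr h, bot_eq_top_iff_finrank_eq_one, hK] at htop
    exact absurd htop (by norm_num)
  let e : Fin 3 ≃ (K →ₐ[ℚ] AlgebraicClosure ℚ) :=
    (Fintype.equivFinOfCardEq (by rw [AlgHom.card, hK])).symm
  obtain ⟨s, hs, N, hsD⟩ := exists_sq_eq_neg_three_mul_vandermonde_eq_algebraMap hdisc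
    (pb.basis.reindex (finCongr hdim)) (θ := pb.gen) (by simp) e
  exact exists_pow_three_eq_algebraMap_of_sq_eq_neg_three hK e hθ hs hsD

end NumberField

/-- Let `L` be a cubic number field whose discriminant equals `−3n²` for some
integer `n`.  Then `L` is a pure cubic field: `L = ℚ(∛m)` for some cube-free
integer `m`. -/
theorem cubic_field_with_discr_neg_three_sq_is_pure (L : Type*) [Field L]
    [NumberField L] (hdeg : Module.finrank ℚ L = 3)
    (n : ℤ) (hdisc : NumberField.discr L = -3 * n ^ 2) :
    ∃ (m : ℤ) (α : L), (∀ p : ℤ, Prime p → ¬(p ^ 3 ∣ m)) ∧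
      α ^ 3 = (m : L) ∧ IntermediateField.adjoin ℚ {α} = ⊤ := by
  obtain ⟨x, hx, r, hxr⟩ := NumberField.exists_pow_three_eq_algebraMap_of_discr_eq hdeg hdisc
  have hr : r ≠ 0 := by
    rintro rfl
    rw [map_zero, pow_eq_zero_iff three_ne_zero] at hxr
    exact hx (hxr ▸ zero_mem _)
  obtain ⟨m, hm, q, hq, hqr⟩ := Rat.exists_pow_mul_eq_intCast three_ne_zero hr
  refine ⟨m, algebraMap ℚ L q * x, hm, ?_,
    adjoin_simple_eq_top_of_finrank_prime (hdeg ▸ Nat.prime_three) fun h => hx ?_⟩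
  · rw [mul_pow, hxr, ← map_pow, ← map_mul, hqr, map_intCast]
  · simpa [hq] using mul_mem (IntermediateField.algebraMap_mem ⊥ q⁻¹) h
end
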